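/- arXiv:2512.22975 — 12 statements merged into one kernel-verified Lean document; each statement's English description precedes it below -/
import Mathlib

section
/- Let G1 and G2 be finite nonempty graphs. If G1 is a complete graph, then thin(G1 ∨ G2) = thin(G2). If neither G1 nor G2 is a complete graph, then thin(G1 ∨ G2) = thin(G1) + thin(G2). -/
noncomputable def thinness {V : Type*} (G : SimpleGraph V) : ℕ :=
  sInf {k | ∃ (r : V → V → Prop) (_ : IsStrictTotalOrder V r) (c : V → Fin k),
    ∀ u v w, r u v → r v w → c u = c v → G.Adj u w → G.Adj v w}

/-- The join of two graphs: their disjoint union together with all edges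
between the two vertex sets. -/
def joinGraph {V₁ V₂ : Type*} (G₁ : SimpleGraph V₁) (G₂ : SimpleGraph V₂) :
    SimpleGraph (V₁ ⊕ V₂) where
  Adj x y :=
    match x, y with
    | .inl a, .inl b => G₁.Adj a b
    | .inr a, .inr b => G₂.Adj a b
    | .inl _, .inr _ => True
    | .inr _, .inl _ => True
  symm := ⟨by
    rintro (a | a) (b | b) h
    · exact h.symm
    · trivial
    · trivial
    · exact h.symm⟩
  loopless := ⟨by
    rintro (a | a) h
    · exact G₁.loopless.irrefl a h
    · exact G₂.loopless.irrefl a h⟩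

/-- A graph is complete if every two distinct vertices are adjacent. -/
def IsCompleteGraph {V : Type*} (G : SimpleGraph V) : Prop :=
  ∀ u v : V, u ≠ v → G.Adj u v

section Aux
set_option linter.unusedSectionVars false

variable {V : Type*} [Fintype V]

def ThinSet (G : SimpleGraph V) : Set ℕ :=
  {k | ∃ (r : V → V → Prop) (_ : IsStrictTotalOrder V r) (c : V → Fin k),
    ∀ u v w, r u v → r v w → c u = c v → G.Adj u w → G.Adj v w}

lemma thinness_eq (G : SimpleGraph V) : thinness G = sInf (ThinSet G) := rfl

noncomputable def rpos (r : V → V → Prop) (a : V) : ℕ := {b | r b a}.ncard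

lemma rpos_lt_rpos (r : V → V → Prop) [IsStrictTotalOrder V r] {a b : V} (h : r a b) :
    rpos r a < rpos r b := by
  have hsub : {x | r x a} ⊆ {x | r x b} := fun x hx => trans_of r hx h
  have hab : a ∈ {x | r x b} := h
  have hna : a ∉ {x | r x a} := irrefl_of r a
  exact Set.ncard_lt_ncard ((Set.ssubset_iff_of_subset hsub).mpr ⟨a, hab, hna⟩)
    (Set.toFinite _)

lemma rpos_lt_iff (r : V → V → Prop) [IsStrictTotalOrder V r] {a b : V} :
    rpos r a < rpos r b ↔ r a b := by
  constructor
  · intro h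
    rcases trichotomous_of r a b with h' | rfl | h'
    · exact h'
    · exact absurd h (lt_irrefl _)
    · exact absurd (rpos_lt_rpos r h') (by omega)
  · exact rpos_lt_rpos r

lemma rpos_injective (r : V → V → Prop) [IsStrictTotalOrder V r] :
    Function.Injective (rpos r) := by
  intro a b h
  rcases trichotomous_of r a b with h' | h' | h'
  · exact absurd (rpos_lt_rpos r h') (by omega)
  · exact h'
  · exact absurd (rpos_lt_rpos r h') (by omega)

lemma rpos_lt_card (r : V → V → Prop) [IsStrictTotalOrder V r] (a : V) :
    rpos r a < Fintype.card V := by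
  have h : {x | r x a} ⊂ Set.univ :=
    (Set.ssubset_iff_of_subset (Set.subset_univ _)).mpr
      ⟨a, Set.mem_univ a, irrefl_of r a⟩
  have := Set.ncard_lt_ncard h (Set.toFinite _)
  rwa [Set.ncard_univ, Nat.card_eq_fintype_card] at this

lemma isto_of_inj {f : V → ℕ} (hf : Function.Injective f) :
    IsStrictTotalOrder V (fun a b => f a < f b) where
  trichotomous := by
    intro a b hn1 hn2
    rcases lt_trichotomy (f a) (f b) with h | h | h
    · exact absurd h hn1
    · exact hf h
    · exact absurd h hn2
  irrefl := fun a => lt_irrefl _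
  trans := fun a b c h1 h2 => lt_trans h1 h2

lemma mem_thinSet_of (G : SimpleGraph V) {κ : Type*} [Fintype κ]
    (r : V → V → Prop) (hr : IsStrictTotalOrder V r) (c : V → κ)
    (h : ∀ u v w, r u v → r v w → c u = c v → G.Adj u w → G.Adj v w) :
    Fintype.card κ ∈ ThinSet G :=
  ⟨r, hr, fun v => Fintype.equivFin κ (c v),
    fun u v w h1 h2 h3 h4 => h u v w h1 h2 ((Fintype.equivFin κ).injective h3) h4⟩

lemma thinSet_nonempty (G : SimpleGraph V) : (ThinSet G).Nonempty := by
  refine ⟨Fintype.card V, ?_⟩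
  have hf : Function.Injective (fun v => ((Fintype.equivFin V v : ℕ))) :=
    fun a b h => (Fintype.equivFin V).injective (Fin.val_injective h)
  refine ⟨_, isto_of_inj hf, Fintype.equivFin V, ?_⟩
  intro u v w h1 _ h3 _
  exact absurd h1 (by rw [(Fintype.equivFin V).injective h3]; exact lt_irrefl _)

lemma thinness_le (G : SimpleGraph V) {k : ℕ} (h : k ∈ ThinSet G) : thinness G ≤ k :=
  Nat.sInf_le h

lemma thinness_mem (G : SimpleGraph V) : thinness G ∈ ThinSet G :=
  Nat.sInf_mem (thinSet_nonempty G)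

end Aux

section Join
open Sum

variable {V₁ V₂ : Type*} [Fintype V₁] [Fintype V₂]
variable {G₁ : SimpleGraph V₁} {G₂ : SimpleGraph V₂}

lemma restrict_right {k : ℕ} (h : k ∈ ThinSet (joinGraph G₁ G₂)) : k ∈ ThinSet G₂ := by
  obtain ⟨r, hr, c, hc⟩ := h
  haveI := hr
  refine ⟨fun a b => r (inr a) (inr b),
    { trichotomous := ?_, irrefl := fun a => irrefl_of r _,
      trans := fun a b c h1 h2 => trans_of r h1 h2 }, fun v => c (inr v), ?_⟩
  · intro a b hn1 hn2
    rcases trichotomous_of r (inr a : V₁ ⊕ V₂) (inr b) with h' | h' | h'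
    · exact absurd h' hn1
    · exact inr_injective h'
    · exact absurd h' hn2
  · intro u v w h1 h2 h3 h4
    exact hc (inr u) (inr v) (inr w) h1 h2 h3 h4

lemma complete_join_mem [Nonempty V₂] (hcomp : IsCompleteGraph G₁) {k : ℕ}
    (h : k ∈ ThinSet G₂) : k ∈ ThinSet (joinGraph G₁ G₂) := by
  obtain ⟨r₂, hr₂, c₂, h₂⟩ := h
  haveI := hr₂
  set e := Fintype.equivFin V₁ with he
  set key : V₁ ⊕ V₂ → ℕ :=
    Sum.elim (fun a => Fintype.card V₂ + (e a : ℕ)) (fun b => rpos r₂ b) with hkey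
  have hinj : Function.Injective key := by
    rintro (a | a) (b | b) h
    · simp only [hkey, Sum.elim_inl, add_right_inj] at h
      exact congrArg inl (e.injective (Fin.val_injective h))
    · exact absurd h (by have := rpos_lt_card r₂ b; simp [hkey]; omega)
    · exact absurd h (by have := rpos_lt_card r₂ a; simp [hkey]; omega)
    · simp only [hkey, Sum.elim_inr] at h
      exact congrArg inr (rpos_injective r₂ h)
  refine ⟨fun x y => key x < key y, isto_of_inj hinj,
    Sum.elim (fun _ => c₂ (Classical.arbitrary V₂)) c₂, ?_⟩
  rintro (u | u) (v | v) (w | w) h1 h2 h3 h4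
  · exact hcomp v w fun hvw => absurd h2 (by rw [hvw]; exact lt_irrefl _)
  · trivial
  · trivial
  · have h1' : Fintype.card V₂ + (e u : ℕ) < rpos r₂ v := h1
    exact absurd h1' (by have := rpos_lt_card r₂ v; omega)
  · exact hcomp v w fun hvw => absurd h2 (by rw [hvw]; exact lt_irrefl _)
  · have h2' : Fintype.card V₂ + (e v : ℕ) < rpos r₂ w := h2
    exact absurd h2' (by have := rpos_lt_card r₂ w; omega)
  · trivial
  · exact h₂ u v w ((rpos_lt_iff r₂).mp h1) ((rpos_lt_iff r₂).mp h2) h3 h4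

lemma join_sum_mem {k₁ k₂ : ℕ} (h1 : k₁ ∈ ThinSet G₁) (h2 : k₂ ∈ ThinSet G₂) :
    k₁ + k₂ ∈ ThinSet (joinGraph G₁ G₂) := by
  obtain ⟨r₁, hr₁, c₁, hc₁⟩ := h1
  obtain ⟨r₂, hr₂, c₂, hc₂⟩ := h2
  haveI := hr₁; haveI := hr₂
  set key : V₁ ⊕ V₂ → ℕ :=
    Sum.elim (fun a => rpos r₁ a) (fun b => Fintype.card V₁ + rpos r₂ b) with hkey
  have hinj : Function.Injective key := by
    rintro (a | a) (b | b) h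
    · simp only [hkey, Sum.elim_inl] at h
      exact congrArg inl (rpos_injective r₁ h)
    · exact absurd h (by have := rpos_lt_card r₁ a; simp [hkey]; omega)
    · exact absurd h (by have := rpos_lt_card r₁ b; simp [hkey]; omega)
    · simp only [hkey, Sum.elim_inr, add_right_inj] at h
      exact congrArg inr (rpos_injective r₂ h)
  refine ⟨fun x y => key x < key y, isto_of_inj hinj,
    Sum.elim (fun a => Fin.castAdd k₂ (c₁ a)) (fun b => Fin.natAdd k₁ (c₂ b)), ?_⟩
  rintro (u | u) (v | v) (w | w) h1 h2 h3 h4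
  · exact hc₁ u v w ((rpos_lt_iff r₁).mp h1) ((rpos_lt_iff r₁).mp h2)
      (Fin.ext (by simpa using congrArg Fin.val h3)) h4
  · trivial
  · exact absurd (congrArg Fin.val h3) (by have := (c₁ u).isLt; simp; omega)
  · exact absurd (congrArg Fin.val h3) (by have := (c₁ u).isLt; simp; omega)
  · have h1' : Fintype.card V₁ + rpos r₂ u < rpos r₁ v := h1
    exact absurd h1' (by have := rpos_lt_card r₁ v; omega)
  · have h1' : Fintype.card V₁ + rpos r₂ u < rpos r₁ v := h1
    exact absurd h1' (by have := rpos_lt_card r₁ v; omega)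
  · have h2' : Fintype.card V₁ + rpos r₂ v < rpos r₁ w := h2
    exact absurd h2' (by have := rpos_lt_card r₁ w; omega)
  · have h1' : Fintype.card V₁ + rpos r₂ u < Fintype.card V₁ + rpos r₂ v := h1
    have h2' : Fintype.card V₁ + rpos r₂ v < Fintype.card V₁ + rpos r₂ w := h2
    exact hc₂ u v w ((rpos_lt_iff r₂).mp (by omega)) ((rpos_lt_iff r₂).mp (by omega))
      (Fin.ext (by simpa using congrArg Fin.val h3)) h4


lemma join_lower_bound [Nonempty V₁] [Nonempty V₂]
    (hnc₁ : ¬ IsCompleteGraph G₁) (hnc₂ : ¬ IsCompleteGraph G₂) :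
    thinness G₁ + thinness G₂ ≤ thinness (joinGraph G₁ G₂) := by
  classical
  obtain ⟨r, hr, c, hc⟩ := thinness_mem (joinGraph G₁ G₂)
  haveI := hr
  -- nonadjacent pairs, ordered by r
  obtain ⟨a₁, b₁, hab₁, hna₁⟩ : ∃ a b, a ≠ b ∧ ¬ G₁.Adj a b := by
    by_contra hco; push_neg at hco; exact hnc₁ fun u v huv => hco u v huv
  obtain ⟨a₂, b₂, hab₂, hna₂⟩ : ∃ a b, a ≠ b ∧ ¬ G₂.Adj a b := by
    by_contra hco; push_neg at hco; exact hnc₂ fun u v huv => hco u v huv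
  obtain ⟨x₁, y₁, hxy₁, hnxy₁⟩ :
      ∃ x y, r (Sum.inl x) (Sum.inl y) ∧ ¬ G₁.Adj x y := by
    rcases trichotomous_of r (Sum.inl a₁ : V₁ ⊕ V₂) (Sum.inl b₁) with h' | h' | h'
    · exact ⟨a₁, b₁, h', hna₁⟩
    · exact absurd (Sum.inl_injective h') hab₁
    · exact ⟨b₁, a₁, h', fun h => hna₁ h.symm⟩
  obtain ⟨x₂, y₂, hxy₂, hnxy₂⟩ :
      ∃ x y, r (Sum.inr x) (Sum.inr y) ∧ ¬ G₂.Adj x y := by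
    rcases trichotomous_of r (Sum.inr a₂ : V₁ ⊕ V₂) (Sum.inr b₂) with h' | h' | h'
    · exact ⟨a₂, b₂, h', hna₂⟩
    · exact absurd (Sum.inr_injective h') hab₂
    · exact ⟨b₂, a₂, h', fun h => hna₂ h.symm⟩
  set U₁ : Set V₁ := {u | ∀ w, r (Sum.inl u) (Sum.inl w) → G₁.Adj u w} with hU₁
  set U₂ : Set V₂ := {u | ∀ w, r (Sum.inr u) (Sum.inr w) → G₂.Adj u w} with hU₂
  have hx₁ : x₁ ∉ U₁ := fun h => hnxy₁ (h y₁ hxy₁)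
  have hx₂ : x₂ ∉ U₂ := fun h => hnxy₂ (h y₂ hxy₂)
  have keyL : ∀ u v, c (Sum.inl u) = c (Sum.inr v) → u ∈ U₁ ∨ v ∈ U₂ := by
    intro u v hcv
    rcases trichotomous_of r (Sum.inl u : V₁ ⊕ V₂) (Sum.inr v) with h' | h' | h'
    · exact Or.inr fun w hw => hc (Sum.inl u) (Sum.inr v) (Sum.inr w) h' hw hcv trivial
    · exact (Sum.inl_ne_inr h').elim
    · exact Or.inl fun w hw => hc (Sum.inr v) (Sum.inl u) (Sum.inl w) h' hw hcv.symm trivial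
  set R₁ : Finset (Fin (thinness (joinGraph G₁ G₂))) :=
    (Finset.univ.filter (fun u => u ∉ U₁)).image (fun u => c (Sum.inl u)) with hR₁
  set R₂ : Finset (Fin (thinness (joinGraph G₁ G₂))) :=
    (Finset.univ.filter (fun u => u ∉ U₂)).image (fun u => c (Sum.inr u)) with hR₂
  have hdisj : Disjoint R₁ R₂ := by
    rw [Finset.disjoint_left]
    intro j hj1 hj2
    simp only [hR₁, hR₂, Finset.mem_image, Finset.mem_filter, Finset.mem_univ,
      true_and] at hj1 hj2
    obtain ⟨u, hu, hju⟩ := hj1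
    obtain ⟨v, hv, hjv⟩ := hj2
    rcases keyL u v (hju.trans hjv.symm) with h | h
    · exact hu h
    · exact hv h
  have hN := Fintype.card (V₁ ⊕ V₂)
  -- side bound for G₂
  have side₂ : thinness G₂ ≤ R₂.card := by
    set N := Fintype.card (V₁ ⊕ V₂) with hNdef
    set p : V₂ → ℕ := fun v => rpos r (Sum.inr v) with hpdef
    have hpN : ∀ v, p v < N := fun v => rpos_lt_card r _
    have hp : ∀ v w, p v < p w ↔ r (Sum.inr v) (Sum.inr w) := fun v w => rpos_lt_iff r
    set key : V₂ → ℕ := fun v => (if v ∈ U₂ then N else 0) + p v with hkeydef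
    have hkeyinj : Function.Injective key := by
      intro v w h
      by_cases hv : v ∈ U₂ <;> by_cases hw : w ∈ U₂ <;>
        simp only [hkeydef, if_pos, if_neg, hv, hw, if_true, if_false] at h
      · exact Sum.inr_injective (rpos_injective r (by omega : p v = p w))
      · exact absurd h (by have := hpN w; have := hpN v; omega)
      · exact absurd h (by have := hpN w; have := hpN v; omega)
      · exact Sum.inr_injective (rpos_injective r (by omega : p v = p w))
    have hmem : ∀ v : V₂, v ∉ U₂ → c (Sum.inr v) ∈ R₂ := by
      intro v hv
      exact Finset.mem_image.mpr ⟨v, Finset.mem_filter.mpr ⟨Finset.mem_univ _, hv⟩, rfl⟩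
    set cF : V₂ → {x // x ∈ R₂} := fun v =>
      if hv : v ∈ U₂ then ⟨c (Sum.inr x₂), hmem x₂ hx₂⟩
      else ⟨c (Sum.inr v), hmem v hv⟩ with hcFdef
    have hcons : ∀ u v w, key u < key v → key v < key w → cF u = cF v →
        G₂.Adj u w → G₂.Adj v w := by
      intro u v w h1 h2 h3 h4
      by_cases hv : v ∈ U₂
      · have hw : w ∈ U₂ := by
          by_contra hw
          simp only [hkeydef, if_pos hv, if_neg hw] at h2
          exact absurd h2 (by have := hpN v; have := hpN w; omega)
        simp only [hkeydef, if_pos hv, if_pos hw] at h2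
        exact hv w ((hp v w).mp (by omega))
      · have hu : u ∉ U₂ := by
          intro hu
          simp only [hkeydef, if_pos hu, if_neg hv] at h1
          exact absurd h1 (by have := hpN v; omega)
        have hcuv : c (Sum.inr u) = c (Sum.inr v) := by
          simp only [hcFdef, dif_neg hu, dif_neg hv] at h3
          exact Subtype.ext_iff.mp h3
        rcases trichotomous_of r (Sum.inr v : V₁ ⊕ V₂) (Sum.inr w) with hvw | hvw | hvw
        · have huv : r (Sum.inr u : V₁ ⊕ V₂) (Sum.inr v) := by
            apply (hp u v).mp
            simp only [hkeydef, if_neg hu, if_neg hv] at h1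
            omega
          exact hc (Sum.inr u) (Sum.inr v) (Sum.inr w) huv hvw hcuv h4
        · rw [Sum.inr_injective hvw] at h2
          exact absurd h2 (lt_irrefl _)
        · by_cases hw : w ∈ U₂
          · exact (hw v hvw).symm
          · simp only [hkeydef, if_neg hv, if_neg hw] at h2
            exact absurd ((hp w v).mpr hvw) (by omega)
    have := mem_thinSet_of G₂ _ (isto_of_inj hkeyinj) cF hcons
    rw [Fintype.card_coe] at this
    exact thinness_le G₂ this
  -- side bound for G₁
  have side₁ : thinness G₁ ≤ R₁.card := by
    set N := Fintype.card (V₁ ⊕ V₂) with hNdef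
    set p : V₁ → ℕ := fun v => rpos r (Sum.inl v) with hpdef
    have hpN : ∀ v, p v < N := fun v => rpos_lt_card r _
    have hp : ∀ v w, p v < p w ↔ r (Sum.inl v) (Sum.inl w) := fun v w => rpos_lt_iff r
    set key : V₁ → ℕ := fun v => (if v ∈ U₁ then N else 0) + p v with hkeydef
    have hkeyinj : Function.Injective key := by
      intro v w h
      by_cases hv : v ∈ U₁ <;> by_cases hw : w ∈ U₁ <;>
        simp only [hkeydef, if_pos, if_neg, hv, hw, if_true, if_false] at h
      · exact Sum.inl_injective (rpos_injective r (by omega : p v = p w))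
      · exact absurd h (by have := hpN w; have := hpN v; omega)
      · exact absurd h (by have := hpN w; have := hpN v; omega)
      · exact Sum.inl_injective (rpos_injective r (by omega : p v = p w))
    have hmem : ∀ v : V₁, v ∉ U₁ → c (Sum.inl v) ∈ R₁ := by
      intro v hv
      exact Finset.mem_image.mpr ⟨v, Finset.mem_filter.mpr ⟨Finset.mem_univ _, hv⟩, rfl⟩
    set cF : V₁ → {x // x ∈ R₁} := fun v =>
      if hv : v ∈ U₁ then ⟨c (Sum.inl x₁), hmem x₁ hx₁⟩
      else ⟨c (Sum.inl v), hmem v hv⟩ with hcFdef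
    have hcons : ∀ u v w, key u < key v → key v < key w → cF u = cF v →
        G₁.Adj u w → G₁.Adj v w := by
      intro u v w h1 h2 h3 h4
      by_cases hv : v ∈ U₁
      · have hw : w ∈ U₁ := by
          by_contra hw
          simp only [hkeydef, if_pos hv, if_neg hw] at h2
          exact absurd h2 (by have := hpN v; have := hpN w; omega)
        simp only [hkeydef, if_pos hv, if_pos hw] at h2
        exact hv w ((hp v w).mp (by omega))
      · have hu : u ∉ U₁ := by
          intro hu
          simp only [hkeydef, if_pos hu, if_neg hv] at h1
          exact absurd h1 (by have := hpN v; omega)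
        have hcuv : c (Sum.inl u) = c (Sum.inl v) := by
          simp only [hcFdef, dif_neg hu, dif_neg hv] at h3
          exact Subtype.ext_iff.mp h3
        rcases trichotomous_of r (Sum.inl v : V₁ ⊕ V₂) (Sum.inl w) with hvw | hvw | hvw
        · have huv : r (Sum.inl u : V₁ ⊕ V₂) (Sum.inl v) := by
            apply (hp u v).mp
            simp only [hkeydef, if_neg hu, if_neg hv] at h1
            omega
          exact hc (Sum.inl u) (Sum.inl v) (Sum.inl w) huv hvw hcuv h4
        · rw [Sum.inl_injective hvw] at h2
          exact absurd h2 (lt_irrefl _)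
        · by_cases hw : w ∈ U₁
          · exact (hw v hvw).symm
          · simp only [hkeydef, if_neg hv, if_neg hw] at h2
            exact absurd ((hp w v).mpr hvw) (by omega)
    have := mem_thinSet_of G₁ _ (isto_of_inj hkeyinj) cF hcons
    rw [Fintype.card_coe] at this
    exact thinness_le G₁ this
  calc thinness G₁ + thinness G₂ ≤ R₁.card + R₂.card := add_le_add side₁ side₂
    _ = (R₁ ∪ R₂).card := (Finset.card_union_of_disjoint hdisj).symm
    _ ≤ Fintype.card (Fin (thinness (joinGraph G₁ G₂))) := Finset.card_le_univ _
    _ = thinness (joinGraph G₁ G₂) := Fintype.card_fin _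

end Join

/-- Thinness of the join: if `G₁` is complete, `thin(G₁ ∨ G₂) = thin(G₂)`;
if neither `G₁` nor `G₂` is complete, `thin(G₁ ∨ G₂) = thin(G₁) + thin(G₂)`. -/
theorem thinness_join {V₁ V₂ : Type*} [Fintype V₁] [Fintype V₂]
    [Nonempty V₁] [Nonempty V₂] (G₁ : SimpleGraph V₁) (G₂ : SimpleGraph V₂) :
    (IsCompleteGraph G₁ → thinness (joinGraph G₁ G₂) = thinness G₂) ∧
    (¬ IsCompleteGraph G₁ → ¬ IsCompleteGraph G₂ →
      thinness (joinGraph G₁ G₂) = thinness G₁ + thinness G₂) := by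
  constructor
  · intro hcomp
    exact le_antisymm
      (thinness_le _ (complete_join_mem hcomp (thinness_mem G₂)))
      (thinness_le G₂ (restrict_right (thinness_mem (joinGraph G₁ G₂))))
  · intro h1 h2
    exact le_antisymm
      (thinness_le _ (join_sum_mem (thinness_mem G₁) (thinness_mem G₂)))
      (join_lower_bound h1 h2)
end

section
/- Let H be a module of a finite graph G such that the subgraph of G induced by H is complete, and let G|H be the graph obtained by contracting H into a single vertex. Then thin(G) = thin(G|H). -/
/-- A module of `G`: every vertex outside `X` is adjacent either to all
vertices of `X` or to none of them. -/
def IsModule {V : Type*} (G : SimpleGraph V) (X : Set V) : Prop :=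
  ∀ v ∉ X, (∀ x ∈ X, G.Adj v x) ∨ (∀ x ∈ X, ¬ G.Adj v x)

/-- The contraction of a vertex set `H` of `G` into a single vertex (`none`),
which is adjacent exactly to the vertices outside `H` adjacent to `H`. -/
def contractSet {V : Type*} (G : SimpleGraph V) (H : Set V) :
    SimpleGraph (Option {v : V // v ∉ H}) where
  Adj x y :=
    match x, y with
    | some a, some b => G.Adj a.1 b.1
    | some a, none => ∃ h ∈ H, G.Adj a.1 h
    | none, some b => ∃ h ∈ H, G.Adj b.1 h
    | none, none => False
  symm := by
    constructor
    rintro (_ | a) (_ | b) h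
    · exact h
    · exact h
    · exact h
    · exact h.symm
  loopless := by
    constructor
    rintro (_ | a) h
    · exact h
    · exact G.irrefl h

/-- Contracting a complete module into a single vertex preserves thinness. -/
theorem thinness_contract_complete_module {V : Type*} [Fintype V]
    (G : SimpleGraph V) (H : Set V) (hne : H.Nonempty) (hmod : IsModule G H)
    (hcomplete : G.IsClique H) :
    thinness G = thinness (contractSet G H) := by
  classical
  obtain ⟨h₀, hh₀⟩ := hne
  set W := Option {v : V // v ∉ H} with hW
  -- section
  let ι : W → V := fun x => x.elim h₀ (·.1)
  have hιinj : Function.Injective ι := by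
    rintro (_ | a) (_ | b) h
    · rfl
    · simp only [ι, Option.elim] at h
      rw [h] at hh₀; exact absurd hh₀ b.2
    · simp only [ι, Option.elim] at h
      rw [← h] at hh₀; exact absurd hh₀ a.2
    · simp only [ι, Option.elim] at h
      exact congrArg some (Subtype.ext h)
  have hιadj : ∀ x y : W, (contractSet G H).Adj x y ↔ G.Adj (ι x) (ι y) := by
    rintro (_ | a) (_ | b)
    · simp [contractSet, ι]
    · constructor
      · rintro ⟨h, hh, hadj⟩
        rcases hmod b.1 b.2 with hall | hnone
        · exact ((hall h₀ hh₀).symm)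
        · exact absurd hadj (hnone h hh)
      · intro h; exact ⟨h₀, hh₀, h.symm⟩
    · constructor
      · rintro ⟨h, hh, hadj⟩
        rcases hmod a.1 a.2 with hall | hnone
        · exact hall h₀ hh₀
        · exact absurd hadj (hnone h hh)
      · intro h; exact ⟨h₀, hh₀, h⟩
    · simp [contractSet, ι]
  -- collapse map
  let φ : V → W := fun v => if h : v ∈ H then none else some ⟨v, h⟩
  have hφadj : ∀ x y : V, φ x ≠ φ y → (G.Adj x y ↔ (contractSet G H).Adj (φ x) (φ y)) := by
    intro x y hne
    by_cases hx : x ∈ H <;> by_cases hy : y ∈ H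
    · simp [φ, hx, hy] at hne
    · simp only [φ, dif_pos hx, dif_neg hy]
      constructor
      · intro h; exact ⟨x, hx, h.symm⟩
      · rintro ⟨h, hh, hadj⟩
        rcases hmod y hy with hall | hnone
        · exact (hall x hx).symm
        · exact absurd hadj (hnone h hh)
    · simp only [φ, dif_neg hx, dif_pos hy]
      constructor
      · intro h; exact ⟨y, hy, h⟩
      · rintro ⟨h, hh, hadj⟩
        rcases hmod x hx with hall | hnone
        · exact hall y hy
        · exact absurd hadj (hnone h hh)
    · simp only [φ, dif_neg hx, dif_neg hy]; exact Iff.rfl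
  have hsets : {k | ∃ (r : V → V → Prop) (_ : IsStrictTotalOrder V r) (c : V → Fin k),
      ∀ u v w, r u v → r v w → c u = c v → G.Adj u w → G.Adj v w} =
      {k | ∃ (r : W → W → Prop) (_ : IsStrictTotalOrder W r) (c : W → Fin k),
      ∀ u v w, r u v → r v w → c u = c v → (contractSet G H).Adj u w → (contractSet G H).Adj v w} := by
    ext k
    constructor
    · rintro ⟨r, hr, c, hc⟩
      refine ⟨fun x y => r (ι x) (ι y), ?_, fun x => c (ι x), ?_⟩
      · refine { trichotomous := ?_, irrefl := ?_, trans := ?_ }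
        · intro x y hxy hyx
          refine ((?_ : _ ∨ x = y ∨ _).resolve_left hxy).resolve_right hyx
          rcases trichotomous_of (r := r) (ι x) (ι y) with h | h | h
          · exact Or.inl h
          · exact Or.inr (Or.inl (hιinj h))
          · exact Or.inr (Or.inr h)
        · exact fun x => hr.irrefl (ι x)
        · exact fun x y z => hr.trans (ι x) (ι y) (ι z)
      · intro u v w huv hvw hcc hadj
        rw [hιadj] at hadj ⊢
        exact hc _ _ _ huv hvw hcc hadj
    · rintro ⟨r, hr, c, hc⟩
      -- tiebreak
      obtain ⟨t, ht⟩ : ∃ t : V → V → Prop, IsStrictTotalOrder V t :=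
        ⟨WellOrderingRel, inferInstance⟩
      refine ⟨fun x y => r (φ x) (φ y) ∨ (φ x = φ y ∧ t x y), ?_, fun x => c (φ x), ?_⟩
      · refine { trichotomous := ?_, irrefl := ?_, trans := ?_ }
        · intro x y hxy hyx
          refine ((?_ : _ ∨ x = y ∨ _).resolve_left hxy).resolve_right hyx
          rcases trichotomous_of (r := r) (φ x) (φ y) with h | h | h
          · exact Or.inl (Or.inl h)
          · rcases trichotomous_of (r := t) x y with h' | h' | h'
            · exact Or.inl (Or.inr ⟨h, h'⟩)
            · exact Or.inr (Or.inl h')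
            · exact Or.inr (Or.inr (Or.inr ⟨h.symm, h'⟩))
          · exact Or.inr (Or.inr (Or.inl h))
        · intro x h
          rcases h with h | ⟨_, h⟩
          · exact hr.irrefl _ h
          · exact ht.irrefl _ h
        · intro x y z hxy hyz
          rcases hxy with h | ⟨he, h⟩ <;> rcases hyz with h' | ⟨he', h'⟩
          · exact Or.inl (hr.trans _ _ _ h h')
          · exact Or.inl (he' ▸ h)
          · exact Or.inl (he ▸ h')
          · exact Or.inr ⟨he.trans he', ht.trans _ _ _ h h'⟩
      · intro u v w huv hvw hcc hadj
        have huv' : u ≠ v := by rintro rfl; rcases huv with h | ⟨_, h⟩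
                                exacts [hr.irrefl _ h, ht.irrefl _ h]
        have hvw' : v ≠ w := by rintro rfl; rcases hvw with h | ⟨_, h⟩
                                exacts [hr.irrefl _ h, ht.irrefl _ h]
        have hmem : ∀ a b : V, φ a = φ b → a ≠ b → a ∈ H ∧ b ∈ H := by
          intro a b hab hne'
          by_cases ha : a ∈ H <;> by_cases hb : b ∈ H
          · exact ⟨ha, hb⟩
          · simp [φ, ha, hb] at hab
          · simp [φ, ha, hb] at hab
          · simp [φ, ha, hb] at hab
            exact absurd (Subtype.ext_iff.mp (Option.some_injective _ hab)) hne'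
        rcases huv with huv | ⟨heuv, _⟩
        · rcases hvw with hvw | ⟨hevw, _⟩
          · -- both strict in r
            have hφuw : φ u ≠ φ w := by
              intro h
              exact hr.irrefl _ (h ▸ hr.trans _ _ _ huv hvw)
            have hφuv : φ u ≠ φ v := fun h => hr.irrefl _ (h ▸ huv)
            have hφvw : φ v ≠ φ w := fun h => hr.irrefl _ (h ▸ hvw)
            rw [hφadj _ _ hφvw]
            rw [hφadj _ _ hφuw] at hadj
            exact hc _ _ _ huv hvw hcc hadj
          · -- v, w both in H : clique
            obtain ⟨hv, hw⟩ := hmem v w hevw hvw'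
            exact hcomplete hv hw hvw'
        · -- u, v both in H
          obtain ⟨hu, hv⟩ := hmem u v heuv huv'
          by_cases hw : w ∈ H
          · exact hcomplete hv hw hvw'
          · rcases hmod w hw with hall | hnone
            · exact (hall v hv).symm
            · exact absurd hadj.symm (hnone u hu)
  unfold thinness
  exact congrArg sInf hsets
end

section
/- Let H be a module of a finite graph G such that the subgraph G[H] induced by H is an interval graph and H is not a clique of G. Let G' be the graph obtained from G by deleting all vertices of H except for two nonadjacent vertices of H. Then thin(G) = thin(G'). -/
/-- A graph is an interval graph if its vertices can be assigned closed real
intervals such that two distinct vertices are adjacent iff their intervals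
intersect. -/
def IsIntervalGraph {V : Type*} (G : SimpleGraph V) : Prop :=
  ∃ l r : V → ℝ, (∀ v, l v ≤ r v) ∧
    ∀ u v : V, u ≠ v →
      (G.Adj u v ↔ (Set.Icc (l u) (r u) ∩ Set.Icc (l v) (r v)).Nonempty)

/-- Lexicographic combination of a pulled-back strict total order and a strict
total order is a strict total order. -/
theorem lexSTO {α β : Type*} (f : α → β) (rb : β → β → Prop) (s : α → α → Prop)
    (hb : IsStrictTotalOrder β rb) (hs : IsStrictTotalOrder α s) :
    IsStrictTotalOrder α (fun a b => rb (f a) (f b) ∨ (f a = f b ∧ s a b)) := by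
  refine { trichotomous := ?_, irrefl := ?_, trans := ?_ }
  · intro a b; refine (fun h hab hba => h.elim (fun h => absurd h hab) (fun h => h.elim id (fun h => absurd h hba))) (?_ : (rb (f a) (f b) ∨ (f a = f b ∧ s a b)) ∨ a = b ∨ (rb (f b) (f a) ∨ (f b = f a ∧ s b a)))
    rcases trichotomous_of rb (f a) (f b) with h | h | h
    · exact Or.inl (Or.inl h)
    · rcases trichotomous_of s a b with h' | h' | h'
      · exact Or.inl (Or.inr ⟨h, h'⟩)
      · exact Or.inr (Or.inl h')
      · exact Or.inr (Or.inr (Or.inr ⟨h.symm, h'⟩))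
    · exact Or.inr (Or.inr (Or.inl h))
  · intro a h
    rcases h with h | ⟨_, h⟩
    · exact irrefl_of rb _ h
    · exact irrefl_of s _ h
  · rintro a b c (h1 | ⟨e1, h1⟩) (h2 | ⟨e2, h2⟩)
    · exact Or.inl (trans_of rb h1 h2)
    · exact Or.inl (e2 ▸ h1)
    · exact Or.inl (e1 ▸ h2)
    · exact Or.inr ⟨e1.trans e2, trans_of s h1 h2⟩

theorem thinSet_nonempty_s3 {W : Type*} [Finite W] (G : SimpleGraph W) :
    ∃ k, k ∈ {k | ∃ (r : W → W → Prop) (_ : IsStrictTotalOrder W r) (c : W → Fin k),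
      ∀ u v w, r u v → r v w → c u = c v → G.Adj u w → G.Adj v w} := by
  have : Fintype W := Fintype.ofFinite W
  refine ⟨Fintype.card W, WellOrderingRel, inferInstance, Fintype.equivFin W, ?_⟩
  intro u x y hux _ hc _
  exact absurd hux (((Fintype.equivFin W).injective hc) ▸ irrefl_of WellOrderingRel x)

/-- An interval representation yields a "1-thin" strict total order:
sorting by right endpoints. -/
theorem interval_order {V : Type*} (G : SimpleGraph V) (H : Set V)
    (hint : IsIntervalGraph (G.induce H)) :
    ∃ s : V → V → Prop, IsStrictTotalOrder V s ∧
      ∀ a b c, a ∈ H → b ∈ H → c ∈ H → s a b → s b c → G.Adj a c → G.Adj b c := by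
  classical
  obtain ⟨l, r, hlr, hiff⟩ := hint
  let re : V → ℝ := fun a => if h : a ∈ H then r ⟨a, h⟩ else 0
  have reEq : ∀ x (hx : x ∈ H), re x = r ⟨x, hx⟩ := fun x hx => dif_pos hx
  refine ⟨fun a b => re a < re b ∨ (re a = re b ∧ WellOrderingRel a b),
    lexSTO re (· < ·) WellOrderingRel inferInstance inferInstance, ?_⟩
  intro a b c ha hb hc hab hbc hac
  have key : ∀ x y (hx : x ∈ H) (hy : y ∈ H),
      (re x < re y ∨ (re x = re y ∧ WellOrderingRel x y)) → r ⟨x, hx⟩ ≤ r ⟨y, hy⟩ := by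
    intro x y hx hy h
    rcases h with h | ⟨h, _⟩
    · rw [reEq x hx, reEq y hy] at h; exact le_of_lt h
    · rw [reEq x hx, reEq y hy] at h; exact le_of_eq h
  have hrab : r ⟨a, ha⟩ ≤ r ⟨b, hb⟩ := key a b ha hb hab
  have hrbc : r ⟨b, hb⟩ ≤ r ⟨c, hc⟩ := key b c hb hc hbc
  have hbc_ne : b ≠ c := by
    rintro rfl
    rcases hbc with h | ⟨_, h⟩
    · exact lt_irrefl _ h
    · exact irrefl_of WellOrderingRel _ h
  have hac_ne : (⟨a, ha⟩ : H) ≠ ⟨c, hc⟩ := fun h => hac.ne (congrArg Subtype.val h)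
  have hadj : (G.induce H).Adj ⟨a, ha⟩ ⟨c, hc⟩ := hac
  obtain ⟨t, ⟨⟨_, hta2⟩, ⟨htc1, _⟩⟩⟩ := (hiff _ _ hac_ne).mp hadj
  have : (G.induce H).Adj ⟨b, hb⟩ ⟨c, hc⟩ := by
    refine (hiff _ _ (fun h => hbc_ne (congrArg Subtype.val h))).mpr
      ⟨max (l ⟨b, hb⟩) (l ⟨c, hc⟩), ⟨le_max_left _ _, ?_⟩, ⟨le_max_right _ _, ?_⟩⟩
    · exact max_le (hlr _) (le_trans (le_trans htc1 hta2) hrab)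
    · exact max_le (le_trans (hlr _) hrbc) (hlr _)
  exact this

/-- Core construction: from a consistent solution of the reduced graph, build
one for `G`, provided the representative `p` comes before `q` in the order. -/
theorem core_lemma {V : Type*} (G : SimpleGraph V) (H : Set V) (hmod : IsModule G H)
    (hint : IsIntervalGraph (G.induce H)) (T : Set V) (hT : ∀ a, a ∉ H → a ∈ T)
    (p q : ↥T) (hp : (p : V) ∈ H) (hq : (q : V) ∈ H) (hpq : ¬ G.Adj p q)
    (k : ℕ) (r' : ↥T → ↥T → Prop) (hr' : IsStrictTotalOrder ↥T r')
    (c' : ↥T → Fin k)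
    (hcons : ∀ u v w, r' u v → r' v w → c' u = c' v →
      (G.induce T).Adj u w → (G.induce T).Adj v w)
    (hpq' : r' p q) :
    ∃ (r : V → V → Prop) (_ : IsStrictTotalOrder V r) (c : V → Fin k),
      ∀ u v w, r u v → r v w → c u = c v → G.Adj u w → G.Adj v w := by
  classical
  obtain ⟨s, hsto, hscons⟩ := interval_order G H hint
  let e : V → ↥T := fun a => if h : a ∈ H then p else ⟨a, hT a h⟩
  have heH : ∀ a (h : a ∈ H), e a = p := fun a h => dif_pos h
  have hval : ∀ a (h : a ∉ H), ((e a : ↥T) : V) = a := fun a h => by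
    show ((if h : a ∈ H then p else ⟨a, hT a h⟩ : ↥T) : V) = a
    rw [dif_neg h]
  have hmem : ∀ a, ((e a : ↥T) : V) ∈ H ↔ a ∈ H := by
    intro a
    by_cases h : a ∈ H
    · simp [heH a h, h, hp]
    · rw [hval a h]
  have hinj : ∀ {a b : V}, e a = e b → a = b ∨ (a ∈ H ∧ b ∈ H) := by
    intro a b hab
    by_cases ha : a ∈ H <;> by_cases hb : b ∈ H
    · exact Or.inr ⟨ha, hb⟩
    · exact absurd ((hmem b).mp (congrArg (Subtype.val) hab ▸ (hmem a).mpr ha)) hb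
    · exact absurd ((hmem a).mp (congrArg (Subtype.val) hab.symm ▸ (hmem b).mpr hb)) ha
    · exact Or.inl (by rw [← hval a ha, ← hval b hb, hab])
  have hadjE : ∀ a b, e a ≠ e b → (G.Adj a b ↔ G.Adj (e a) (e b)) := by
    intro a b hne
    by_cases ha : a ∈ H <;> by_cases hb : b ∈ H
    · exact absurd ((heH a ha).trans (heH b hb).symm) hne
    · rw [hval b hb, heH a ha]
      rcases hmod b hb with h | h
      · exact iff_of_true (h a ha).symm (h (↑p) hp).symm
      · exact iff_of_false (fun hx => h a ha hx.symm) (fun hx => h (↑p) hp hx.symm)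
    · rw [hval a ha, heH b hb]
      rcases hmod a ha with h | h
      · exact iff_of_true (h b hb) (h (↑p) hp)
      · exact iff_of_false (h b hb) (h (↑p) hp)
    · rw [hval a ha, hval b hb]
  have hind : ∀ (a b : ↥T), (G.induce T).Adj a b ↔ G.Adj a b := by
    intro a b; simp
  refine ⟨fun a b => r' (e a) (e b) ∨ (e a = e b ∧ s a b),
    lexSTO e r' s hr' hsto, fun a => c' (e a), ?_⟩
  intro u x y hux hxy hc hadj
  have hc' : c' (e u) = c' (e x) := hc
  by_cases hxye : e x = e y
  · have hsxy : s x y := by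
      rcases hxy with h | ⟨_, h⟩
      · rw [hxye] at h; exact absurd h (irrefl_of r' _)
      · exact h
    have hxyH : x ∈ H ∧ y ∈ H := by
      rcases hinj hxye with rfl | h
      · exact absurd hsxy (irrefl_of s _)
      · exact h
    by_cases hu : u ∈ H
    · have hsux : s u x := by
        rcases hux with h | ⟨_, h⟩
        · rw [heH u hu, heH x hxyH.1] at h; exact absurd h (irrefl_of r' _)
        · exact h
      exact hscons u x y hu hxyH.1 hxyH.2 hsux hsxy hadj
    · exfalso
      rcases hmod u hu with hall | hnone
      · have h1 : r' (e u) p := by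
          rcases hux with h | ⟨hh, _⟩
          · rwa [heH x hxyH.1] at h
          · rcases hinj hh with rfl | ⟨h', _⟩
            exacts [absurd hxyH.1 hu, absurd h' hu]
        have hceq : c' (e u) = c' p := by rw [hc', heH x hxyH.1]
        have haduq : (G.induce T).Adj (e u) q := by
          rw [hind]; rw [hval u hu]; exact hall (↑q) hq
        have := hcons (e u) p q h1 hpq' hceq haduq
        rw [hind] at this
        exact hpq this
      · exact hnone y hxyH.2 hadj
  · have hrxy : r' (e x) (e y) := by
      rcases hxy with h | ⟨h, _⟩
      exacts [h, absurd h hxye]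
    by_cases hue : e u = e x
    · rcases hinj hue with rfl | ⟨huH, hxH⟩
      · exact hadj
      · have hyH : y ∉ H := fun hy => hxye ((heH x hxH).trans (heH y hy).symm)
        rcases hmod y hyH with hall | hnone
        · exact (hall x hxH).symm
        · exact absurd hadj.symm (hnone u huH)
    · have hrux : r' (e u) (e x) := by
        rcases hux with h | ⟨h, _⟩
        exacts [h, absurd h hue]
      have huy : e u ≠ e y := by
        rintro hh
        exact irrefl_of r' _ (trans_of r' hrux (hh ▸ hrxy))
      have h1 : G.Adj (e u) (e y) := (hadjE u y huy).mp hadj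
      have h2 := hcons (e u) (e x) (e y) hrux hrxy hc' ((hind _ _).mpr h1)
      exact (hadjE x y hxye).mpr ((hind _ _).mp h2)

/-- If `H` is a module of `G` inducing a non-complete interval graph, then
deleting all vertices of `H` except two nonadjacent ones preserves thinness. -/
theorem thinness_reduce_interval_module {V : Type*} [Fintype V]
    (G : SimpleGraph V) (H : Set V) (hmod : IsModule G H)
    (hint : IsIntervalGraph (G.induce H)) (hnc : ¬ G.IsClique H)
    (v w : V) (hv : v ∈ H) (hw : w ∈ H) (hvw : v ≠ w) (hnadj : ¬ G.Adj v w) :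
    thinness G = thinness (G.induce (Hᶜ ∪ {v, w})) := by
  unfold thinness
  apply le_antisymm
  · set T : Set V := Hᶜ ∪ {v, w} with hTdef
    have hT : ∀ a, a ∉ H → a ∈ T := fun a h => Or.inl h
    have hvT : v ∈ T := Or.inr (by simp)
    have hwT : w ∈ T := Or.inr (by simp)
    obtain ⟨r', hr', c', hcons⟩ := Nat.sInf_mem (thinSet_nonempty_s3 (G.induce T))
    set vS : ↥T := ⟨v, hvT⟩ with hvS
    set wS : ↥T := ⟨w, hwT⟩ with hwS
    have hne : vS ≠ wS := fun h => hvw (congrArg Subtype.val h)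
    apply Nat.sInf_le
    rcases trichotomous_of r' vS wS with h | h | h
    · exact core_lemma G H hmod hint T hT vS wS hv hw hnadj _ r' hr' c' hcons h
    · exact absurd h hne
    · exact core_lemma G H hmod hint T hT wS vS hw hv
        (fun hx => hnadj hx.symm) _ r' hr' c' hcons h
  · obtain ⟨r, hr, c, hcons⟩ := Nat.sInf_mem (thinSet_nonempty_s3 G)
    apply Nat.sInf_le
    refine ⟨fun a b => r a b, ?_, fun a => c a, ?_⟩
    · refine { trichotomous := ?_, irrefl := ?_, trans := ?_ }
      · intro a b; refine (fun h hab hba => h.elim (fun h => absurd h hab) (fun h => h.elim id (fun h => absurd h hba))) (?_ : r (↑a) (↑b) ∨ a = b ∨ r (↑b) (↑a))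
        rcases trichotomous_of r (↑a) (↑b) with h | h | h
        exacts [Or.inl h, Or.inr (Or.inl (Subtype.ext h)), Or.inr (Or.inr h)]
      · exact fun a => irrefl_of r (↑a)
      · exact fun a b d h1 h2 => trans_of r h1 h2
    · intro u x y h1 h2 h3 h4
      have h4' : G.Adj (↑u) (↑y) := by simpa using h4
      have h5 : G.Adj (↑x) (↑y) := hcons (↑u) (↑x) (↑y) h1 h2 h3 h4'
      simpa using h5
end

section
/- For every finite graph G with at least one vertex, thin(G) ≤ 2 · interval-mc(G), where interval-mc(G) is the interval-modular cardinality of G. -/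
/-- A partition of the vertices of `G` (as a set of nonempty pairwise disjoint
covering sets) into modules, each inducing an interval graph. -/
def IsIntervalModularPartition {V : Type*} (G : SimpleGraph V)
    (P : Set (Set V)) : Prop :=
  Setoid.IsPartition P ∧ ∀ s ∈ P, IsModule G s ∧ IsIntervalGraph (G.induce s)

/-- The interval-modular cardinality: the minimum number of parts of a
partition of `V(G)` into modules inducing interval graphs. -/
noncomputable def intervalMC {V : Type*} (G : SimpleGraph V) : ℕ :=
  sInf {k | ∃ P : Set (Set V), IsIntervalModularPartition G P ∧ P.ncard = k}

lemma exists_IMP {V : Type*} (G : SimpleGraph V) :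
    ∃ P : Set (Set V), IsIntervalModularPartition G P := by
  refine ⟨Set.range (fun v => ({v} : Set V)), ⟨?_, ?_⟩, ?_⟩
  · rintro ⟨v, hv⟩
    exact (Set.singleton_nonempty v).ne_empty hv
  · intro a
    refine ⟨{a}, ⟨⟨a, rfl⟩, rfl⟩, ?_⟩
    rintro s ⟨⟨v, rfl⟩, hs⟩
    simp only [Set.mem_singleton_iff] at hs
    subst hs; rfl
  · rintro s ⟨v, rfl⟩
    refine ⟨?_, ?_⟩
    · intro w _
      by_cases h : G.Adj w v
      · left; intro x hx; rw [Set.mem_singleton_iff] at hx; subst hx; exact h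
      · right; intro x hx; rw [Set.mem_singleton_iff] at hx; subst hx; exact h
    · refine ⟨fun _ => 0, fun _ => 0, fun _ => le_refl 0, ?_⟩
      rintro ⟨u, hu⟩ ⟨w, hw⟩ hne
      rw [Set.mem_singleton_iff] at hu hw
      exact absurd (Subtype.ext (hu.trans hw.symm)) hne

/-- For every finite nonempty graph, `thin(G) ≤ 2 · interval-mc(G)`. -/
theorem thinness_le_two_mul_intervalMC {V : Type*} [Fintype V] [Nonempty V]
    (G : SimpleGraph V) :
    thinness G ≤ 2 * intervalMC G := by
  classical
  obtain ⟨P0, hP0⟩ := exists_IMP G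
  have hne : {k | ∃ P : Set (Set V), IsIntervalModularPartition G P ∧ P.ncard = k}.Nonempty :=
    ⟨P0.ncard, P0, hP0, rfl⟩
  obtain ⟨P, hP, hcard⟩ := Nat.sInf_mem hne
  set k := intervalMC G with hk
  -- part function
  have hpart := hP.1.2
  have part_spec : ∀ v : V, (Classical.choose (hpart v)) ∈ P ∧ v ∈ Classical.choose (hpart v) :=
    fun v => (Classical.choose_spec (hpart v)).1
  set part : V → Set V := fun v => Classical.choose (hpart v) with hpartdef
  have part_mem : ∀ v, part v ∈ P := fun v => (part_spec v).1
  have mem_part : ∀ v, v ∈ part v := fun v => (part_spec v).2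
  have part_unique : ∀ v s, s ∈ P → v ∈ s → s = part v :=
    fun v s hs hvs => (Classical.choose_spec (hpart v)).2 s ⟨hs, hvs⟩
  -- index
  haveI : Fintype ↥P := P.toFinite.fintype
  have hcard2 : P.ncard = k := hcard
  have hcard' : Fintype.card ↥P = k := by
    rw [← hcard2, ← Nat.card_coe_set_eq, Nat.card_eq_fintype_card]
  let e : ↥P ≃ Fin k := Fintype.equivFinOfCardEq hcard'
  let idx : V → Fin k := fun v => e ⟨part v, part_mem v⟩
  -- interval reps
  choose L R hLR hIff using fun (s : Set V) (hs : s ∈ P) => (hP.2 s hs).2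
  let rend : V → ℝ := fun v => R (part v) (part_mem v) ⟨v, mem_part v⟩
  have rend_eq : ∀ (x : V) (s : Set V) (hs : s ∈ P) (hx : x ∈ s), part x = s →
      rend x = R s hs ⟨x, hx⟩ := by
    rintro x s hs hx rfl; rfl
  let tie : V → ℕ := fun v => (Fintype.equivFin V v : ℕ)
  have tie_inj : Function.Injective tie := by
    intro a b h
    exact (Fintype.equivFin V).injective (Fin.ext h)
  let key : V → ℕ ×ₗ ℝ ×ₗ ℕ := fun v =>
    toLex ((idx v : ℕ), toLex (rend v, tie v))
  have key_inj : Function.Injective key := by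
    intro a b h
    have := congrArg ofLex h
    have h2 := congrArg Prod.snd this
    have h3 := congrArg ofLex h2
    exact tie_inj (congrArg Prod.snd h3)
  let r : V → V → Prop := fun u v => key u < key v
  haveI : IsTrichotomous V r := ⟨by
    intro a b
    rcases lt_trichotomy (key a) (key b) with h | h | h
    · exact fun h1 _ => absurd h h1
    · exact fun _ _ => key_inj h
    · exact fun _ h2 => absurd h h2⟩
  haveI : IsIrrefl V r := ⟨fun a => lt_irrefl (key a)⟩
  haveI : IsTrans V r := ⟨fun a b c hab hbc => lt_trans hab hbc⟩
  haveI : IsStrictOrder V r := ⟨⟩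
  haveI hsto : IsStrictTotalOrder V r := ⟨⟩
  let c : V → Fin (2 * k) := fun v => Fin.castLE (by omega) (idx v)
  apply Nat.sInf_le
  refine ⟨r, hsto, c, ?_⟩
  intro u v w huv hvw hcuv hadj
  have hidx : idx u = idx v := by
    have : (c u : ℕ) = (c v : ℕ) := congrArg Fin.val hcuv
    exact Fin.ext this
  have hpuv : part u = part v := Subtype.ext_iff.mp (e.injective hidx)
  by_cases hw : w ∈ part u
  · -- interval case
    set s := part u with hs
    have hsP : s ∈ P := part_mem u
    have hu : u ∈ s := mem_part u
    have hv : v ∈ s := hpuv ▸ mem_part v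
    have hws : part w = s := (part_unique w s hsP hw).symm
    have hru : rend u = R s hsP ⟨u, hu⟩ := rend_eq u s hsP hu rfl
    have hrv : rend v = R s hsP ⟨v, hv⟩ := rend_eq v s hsP hv hpuv.symm
    have hrw : rend w = R s hsP ⟨w, hw⟩ := rend_eq w s hsP hw hws
    -- from lex: idx u = idx v = idx w, so rend u ≤ rend v ≤ rend w
    have hidxw : idx w = idx u := by
      simp only [idx]
      congr 1
      exact Subtype.ext hws
    have lex_le : ∀ a b : V, key a < key b → idx a = idx b → rend a ≤ rend b := by
      intro a b hab hiab
      have hab : toLex ((idx a : ℕ), toLex (rend a, tie a)) <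
          toLex ((idx b : ℕ), toLex (rend b, tie b)) := hab
      rw [Prod.Lex.lt_iff] at hab
      rcases hab with h | ⟨h1, h2⟩
      · rw [hiab] at h
        exact absurd h (lt_irrefl _)
      · rw [Prod.Lex.lt_iff] at h2
        rcases h2 with h | ⟨h, _⟩
        · exact le_of_lt h
        · exact le_of_eq h
    have h_uv : rend u ≤ rend v := lex_le u v huv hidx
    have h_vw : rend v ≤ rend w := lex_le v w hvw (hidx.symm.trans hidxw.symm)
    have huv' : key u < key v := huv
    have hvw' : key v < key w := hvw
    have hune : u ≠ w := fun h => (lt_trans huv' hvw').ne (congrArg key h)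
    have hvne : v ≠ w := fun h => hvw'.ne (congrArg key h)
    have hiff := hIff s hsP
    have hadj' : (G.induce s).Adj ⟨u, hu⟩ ⟨w, hw⟩ := by
      simpa using hadj
    have hne' : (⟨u, hu⟩ : ↥s) ≠ ⟨w, hw⟩ := fun h => hune (congrArg Subtype.val h)
    obtain ⟨p, hp1, hp2⟩ := (hiff _ _ hne').mp hadj'
    -- p ∈ [L u, R u] ∩ [L w, R w]
    have hlw_le : L s hsP ⟨w, hw⟩ ≤ R s hsP ⟨u, hu⟩ := le_trans hp2.1 hp1.2
    have hvne' : (⟨v, hv⟩ : ↥s) ≠ ⟨w, hw⟩ := fun h => hvne (congrArg Subtype.val h)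
    have hadjvw : (G.induce s).Adj ⟨v, hv⟩ ⟨w, hw⟩ := by
      rw [hiff _ _ hvne']
      refine ⟨max (L s hsP ⟨v, hv⟩) (L s hsP ⟨w, hw⟩), ⟨le_max_left _ _, ?_⟩,
        ⟨le_max_right _ _, ?_⟩⟩
      · apply max_le (hLR s hsP _)
        calc L s hsP ⟨w, hw⟩ ≤ R s hsP ⟨u, hu⟩ := hlw_le
        _ = rend u := hru.symm
        _ ≤ rend v := h_uv
        _ = R s hsP ⟨v, hv⟩ := hrv
      · apply max_le
        · calc L s hsP ⟨v, hv⟩ ≤ R s hsP ⟨v, hv⟩ := hLR s hsP _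
          _ = rend v := hrv.symm
          _ ≤ rend w := h_vw
          _ = R s hsP ⟨w, hw⟩ := hrw
        · exact hLR s hsP _
    simpa using hadjvw
  · -- module case
    have hmod := (hP.2 (part u) (part_mem u)).1
    rcases hmod w hw with hall | hnone
    · exact (hall v (hpuv ▸ mem_part v)).symm
    · exact absurd hadj (fun h => hnone u (mem_part u) h.symm)
end

section
/- For every finite graph G with twin-cover number k, the cluster-modular cardinality of G satisfies cluster-mc(G) ≤ 2^k + k. -/
def IsClusterGraph {V : Type*} (G : SimpleGraph V) : Prop :=
  ∀ u v : V, G.Reachable u v → u = v ∨ G.Adj u v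

def IsClusterModularPartition {V : Type*} (G : SimpleGraph V)
    (P : Set (Set V)) : Prop :=
  Setoid.IsPartition P ∧ ∀ s ∈ P, IsModule G s ∧ IsClusterGraph (G.induce s)

noncomputable def clusterMC {V : Type*} (G : SimpleGraph V) : ℕ :=
  sInf {k | ∃ P : Set (Set V), IsClusterModularPartition G P ∧ P.ncard = k}

/-- `X` is a twin-cover of `G` if every edge has an endpoint in `X` or joins
two vertices with equal closed neighborhoods. -/
def IsTwinCover {V : Type*} (G : SimpleGraph V) (X : Set V) : Prop :=
  ∀ a b : V, G.Adj a b →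
    a ∈ X ∨ b ∈ X ∨ (G.neighborSet a ∪ {a}) = (G.neighborSet b ∪ {b})

/-- The twin-cover number: the minimum size of a twin-cover. -/
noncomputable def twinCoverNumber {V : Type*} (G : SimpleGraph V) : ℕ :=
  sInf {k | ∃ X : Set V, IsTwinCover G X ∧ X.ncard = k}

lemma cluster_of_trans {W : Type*} (H : SimpleGraph W)
    (ht : ∀ a b c : W, H.Adj a b → H.Adj b c → a = c ∨ H.Adj a c) :
    IsClusterGraph H := by
  intro u v ⟨p⟩
  induction p with
  | nil => exact Or.inl rfl
  | cons h p ih =>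
    rcases ih with rfl | hadj
    · exact Or.inr h
    · exact ht _ _ _ h hadj

/-- Twins outside the cover have the same trace on the cover. -/
lemma trace_eq_of_twins {V : Type*} (G : SimpleGraph V) (X : Set V)
    {a b : V} (ha : a ∉ X) (hb : b ∉ X)
    (h : (G.neighborSet a ∪ {a}) = (G.neighborSet b ∪ {b})) :
    G.neighborSet a ∩ X = G.neighborSet b ∩ X := by
  ext y
  constructor
  · rintro ⟨hy, hyX⟩
    have : y ∈ G.neighborSet b ∪ {b} := h ▸ Or.inl hy
    rcases this with h' | h'
    · exact ⟨h', hyX⟩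
    · exact absurd (h' ▸ hyX) hb
  · rintro ⟨hy, hyX⟩
    have : y ∈ G.neighborSet a ∪ {a} := h.symm ▸ Or.inl hy
    rcases this with h' | h'
    · exact ⟨h', hyX⟩
    · exact absurd (h' ▸ hyX) ha

/-- If `G` has twin-cover number `k`, then `cluster-mc(G) ≤ 2^k + k`. -/
theorem clusterMC_le_of_twinCover {V : Type*} [Fintype V]
    (G : SimpleGraph V) (k : ℕ) (hk : twinCoverNumber G = k) :
    clusterMC G ≤ 2 ^ k + k := by
  classical
  -- obtain an optimal twin-cover
  have hne : {n | ∃ X : Set V, IsTwinCover G X ∧ X.ncard = n}.Nonempty := by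
    refine ⟨(Set.univ : Set V).ncard, Set.univ, ?_, rfl⟩
    intro a b _; exact Or.inl (Set.mem_univ a)
  have hmem := Nat.sInf_mem hne
  rw [show sInf {n | ∃ X : Set V, IsTwinCover G X ∧ X.ncard = n}
      = twinCoverNumber G from rfl, hk] at hmem
  obtain ⟨X, hX, hXcard⟩ := hmem
  -- the partition
  set tr : V → Set V := fun v => G.neighborSet v ∩ X with htr
  set cls : V → Set V := fun v =>
    if v ∈ X then {v} else {u | u ∉ X ∧ tr u = tr v} with hcls
  have hself : ∀ v, v ∈ cls v := by
    intro v
    by_cases hv : v ∈ X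
    · simp [hcls, hv]
    · simp [hcls, hv]
  have hcls_eq : ∀ v w : V, v ∈ cls w → cls v = cls w := by
    intro v w hv
    by_cases hw : w ∈ X
    · simp only [hcls, hw, if_pos, Set.mem_singleton_iff] at hv
      subst hv; rfl
    · simp only [hcls, hw, if_neg, not_false_iff, Set.mem_setOf_eq] at hv
      obtain ⟨hvX, hvw⟩ := hv
      simp only [hcls, if_neg hvX, if_neg hw, hvw]
  set P : Set (Set V) := Set.range cls with hP
  -- key twin fact: adjacency between two non-cover vertices gives equal traces
  have hkey : ∀ a b : V, a ∉ X → b ∉ X → G.Adj a b → tr a = tr b := by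
    intro a b ha hb hab
    rcases hX a b hab with h | h | h
    · exact absurd h ha
    · exact absurd h hb
    · exact trace_eq_of_twins G X ha hb h
  -- P is a cluster-modular partition
  have hPart : IsClusterModularPartition G P := by
    constructor
    · constructor
      · rintro ⟨v, hv⟩
        exact absurd (hv ▸ hself v) (Set.notMem_empty v)
      · intro a
        refine ⟨cls a, ⟨⟨a, rfl⟩, hself a⟩, ?_⟩
        rintro s ⟨⟨w, rfl⟩, has⟩
        exact (hcls_eq a w has) ▸ rfl
    · rintro s ⟨w, rfl⟩
      constructor
      · -- module
        intro v hv
        by_cases hw : w ∈ X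
        · simp only [hcls, if_pos hw] at hv ⊢
          by_cases h : G.Adj v w
          · exact Or.inl (by rintro x rfl; exact h)
          · exact Or.inr (by rintro x rfl; exact h)
        · simp only [hcls, if_neg hw, Set.mem_setOf_eq] at hv ⊢
          by_cases hvX : v ∈ X
          · by_cases hvw : v ∈ tr w
            · refine Or.inl ?_
              rintro x ⟨hxX, hxtr⟩
              have : v ∈ tr x := hxtr ▸ hvw
              exact (this.1 : G.Adj x v).symm
            · refine Or.inr ?_
              rintro x ⟨hxX, hxtr⟩ hadj
              exact hvw (hxtr ▸ ⟨hadj.symm, hvX⟩)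
          · refine Or.inr ?_
            rintro x ⟨hxX, hxtr⟩ hadj
            exact hv ⟨hvX, (hkey v x hvX hxX hadj).trans hxtr⟩
      · -- cluster
        apply cluster_of_trans
        rintro ⟨a, haM⟩ ⟨b, hbM⟩ ⟨c, hcM⟩ hab hbc
        by_cases hw : w ∈ X
        · simp only [hcls, if_pos hw, Set.mem_singleton_iff] at haM hcM
          exact Or.inl (Subtype.ext (haM.trans hcM.symm))
        · simp only [hcls, if_neg hw, Set.mem_setOf_eq] at haM hbM hcM
          have hab' : G.Adj a b := hab
          have hbc' : G.Adj b c := hbc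
          rcases hX a b hab' with h | h | h
          · exact absurd h haM.1
          · exact absurd h hbM.1
          · -- c ∈ N[b] = N[a]
            have hc : c ∈ G.neighborSet b ∪ {b} := Or.inl hbc'
            have hc' : c ∈ G.neighborSet a ∪ {a} := h ▸ hc
            rcases hc' with h' | h'
            · exact Or.inr h'
            · exact Or.inl (Subtype.ext h'.symm)
  -- counting
  have hcount : P.ncard ≤ 2 ^ k + k := by
    have hXfin : X.Finite := Set.toFinite X
    set A : Set (Set V) := (fun x => ({x} : Set V)) '' X with hA
    set B : Set (Set V) :=
      (fun T => {u : V | u ∉ X ∧ tr u = T}) '' {T | T ⊆ X} with hB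
    have hsub : P ⊆ A ∪ B := by
      rintro s ⟨w, rfl⟩
      by_cases hw : w ∈ X
      · exact Or.inl ⟨w, hw, by simp [hcls, hw]⟩
      · refine Or.inr ⟨tr w, fun y hy => hy.2, ?_⟩
        simp [hcls, hw]
    calc P.ncard ≤ (A ∪ B).ncard := Set.ncard_le_ncard hsub (Set.toFinite _)
      _ ≤ A.ncard + B.ncard := Set.ncard_union_le A B
      _ ≤ B.ncard + A.ncard := by omega
      _ ≤ 2 ^ k + k := by
          gcongr
          · -- B.ncard ≤ 2^k
            have h1 : B.ncard ≤ {T : Set V | T ⊆ X}.ncard :=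
              Set.ncard_image_le (Set.toFinite _)
            refine h1.trans ?_
            have h2 : {T : Set V | T ⊆ X}.ncard
                ≤ ((hXfin.toFinset.powerset : Finset (Finset V)) : Set (Finset V)).ncard := by
              apply Set.ncard_le_ncard_of_injOn
                (fun T => (Set.toFinite T).toFinset)
              · intro T hT
                rw [Finset.mem_coe, Finset.mem_powerset]
                intro x hx
                rw [Set.Finite.mem_toFinset] at hx
                rw [Set.Finite.mem_toFinset]
                exact hT hx
              · intro T₁ _ T₂ _ h
                have := congrArg (fun (s : Finset V) => (s : Set V)) h
                simpa using this
            refine h2.trans ?_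
            rw [Set.ncard_coe_finset, Finset.card_powerset]
            have : hXfin.toFinset.card = k := by
              rw [← hXcard]
              exact (Set.ncard_eq_toFinset_card X hXfin).symm
            rw [this]
          · -- A.ncard ≤ k
            have := Set.ncard_image_le (f := fun x => ({x} : Set V)) (s := X) hXfin
            rw [hXcard] at this
            exact this
  -- conclude
  have : clusterMC G ≤ P.ncard := Nat.sInf_le ⟨P, hPart, rfl⟩
  exact this.trans hcount
end

section
/- Let H be a module of a finite graph G. If G admits a d-simultaneous interval representation in which the intervals representing the vertices of H pairwise intersect, then G admits a d-simultaneous interval representation in which the intervals representing the vertices of H are all identical (in which case the label sets of two vertices of H are disjoint whenever the vertices are non-adjacent and intersecting whenever the vertices are adjacent). -/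
def IsSimRep {V : Type*} (G : SimpleGraph V) (d : ℕ)
    (l r : V → ℝ) (lab : V → Set (Fin d)) : Prop :=
  (∀ v, l v ≤ r v) ∧
  ∀ u v : V, u ≠ v →
    (G.Adj u v ↔ (Set.Icc (l u) (r u) ∩ Set.Icc (l v) (r v)).Nonempty ∧
      (lab u ∩ lab v).Nonempty)

/-- If `G` has a `d`-simultaneous interval representation in which the
intervals of the vertices of a module `M` pairwise intersect, then `G` has one
in which those intervals are all identical; in such a representation the label
sets of two distinct vertices of `M` intersect iff the vertices are adjacent. -/
theorem si_module_pairwise_intersecting {V : Type*} [Fintype V]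
    (G : SimpleGraph V) (M : Set V) (hmod : IsModule G M) (d : ℕ)
    (l r : V → ℝ) (lab : V → Set (Fin d)) (hrep : IsSimRep G d l r lab)
    (hpair : ∀ a ∈ M, ∀ b ∈ M,
      (Set.Icc (l a) (r a) ∩ Set.Icc (l b) (r b)).Nonempty) :
    ∃ (l' r' : V → ℝ) (lab' : V → Set (Fin d)), IsSimRep G d l' r' lab' ∧
      (∀ a ∈ M, ∀ b ∈ M, l' a = l' b ∧ r' a = r' b) ∧
      (∀ a ∈ M, ∀ b ∈ M, a ≠ b →
        ((lab' a ∩ lab' b = ∅) ↔ ¬ G.Adj a b)) := by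
  classical
  rcases M.eq_empty_or_nonempty with hM | hM
  · refine ⟨l, r, lab, hrep, ?_, ?_⟩ <;> simp [hM]
  obtain ⟨a₀, ha₀, hmax⟩ := M.exists_max_image l M.toFinite hM
  obtain ⟨b₀, hb₀, hmin⟩ := M.exists_min_image r M.toFinite hM
  set L := l a₀ with hL
  set R := r b₀ with hR
  obtain ⟨x, hx⟩ := hpair a₀ ha₀ b₀ hb₀
  simp only [Set.mem_inter_iff, Set.mem_Icc] at hx
  have hLR : L ≤ R := le_trans hx.1.1 hx.2.2
  -- the M-interval is contained in every old M-interval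
  have hsub : ∀ v ∈ M, Set.Icc L R ⊆ Set.Icc (l v) (r v) := fun v hv =>
    Set.Icc_subset_Icc (hmax v hv) (hmin v hv)
  refine ⟨fun v => if v ∈ M then L else l v, fun v => if v ∈ M then R else r v,
    lab, ⟨?_, ?_⟩, ?_, ?_⟩
  · intro v
    by_cases hv : v ∈ M <;> simp [hv, hLR, hrep.1 v]
  · -- adjacency condition
    have key : ∀ u v, u ≠ v → u ∉ M → v ∈ M →
        (G.Adj u v ↔ (Set.Icc (l u) (r u) ∩ Set.Icc L R).Nonempty ∧
          (lab u ∩ lab v).Nonempty) := by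
      intro u v hne hu hv
      constructor
      · intro h
        have hall : ∀ x ∈ M, G.Adj u x := by
          rcases hmod u hu with hA | hN
          · exact hA
          · exact absurd h (hN v hv)
        have hne₁ : u ≠ a₀ := fun e => hu (e ▸ ha₀)
        have hne₂ : u ≠ b₀ := fun e => hu (e ▸ hb₀)
        obtain ⟨⟨p, hp⟩, _⟩ := (hrep.2 u a₀ hne₁).mp (hall a₀ ha₀)
        obtain ⟨⟨q, hq⟩, _⟩ := (hrep.2 u b₀ hne₂).mp (hall b₀ hb₀)
        simp only [Set.mem_inter_iff, Set.mem_Icc] at hp hq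
        have h1 : L ≤ r u := le_trans hp.2.1 hp.1.2
        have h2 : l u ≤ R := le_trans hq.1.1 hq.2.2
        refine ⟨⟨max (l u) L, ?_⟩, ((hrep.2 u v hne).mp h).2⟩
        simp only [Set.mem_inter_iff, Set.mem_Icc]
        exact ⟨⟨le_max_left _ _, max_le (hrep.1 u) h1⟩,
          ⟨le_max_right _ _, max_le h2 hLR⟩⟩
      · rintro ⟨⟨p, hp⟩, hlab⟩
        exact (hrep.2 u v hne).mpr ⟨⟨p, hp.1, hsub v hv hp.2⟩, hlab⟩
    intro u v hne
    by_cases hu : u ∈ M <;> by_cases hv : v ∈ M <;> simp only [hu, hv, if_pos, if_neg,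
      ite_true, ite_false]
    · -- both in M
      have hold := hrep.2 u v hne
      have h1 : (Set.Icc L R ∩ Set.Icc L R).Nonempty := ⟨L, by simp [hLR]⟩
      have h2 := hpair u hu v hv
      constructor
      · intro h
        exact ⟨h1, (hold.mp h).2⟩
      · intro h
        exact hold.mpr ⟨h2, h.2⟩
    · rw [G.adj_comm, Set.inter_comm, key v u hne.symm hv hu, Set.inter_comm (lab v)]
    · exact key u v hne hu hv
    · exact hrep.2 u v hne
  · intro a ha b hb
    simp [ha, hb]
  · intro a ha b hb hne
    have hold := hrep.2 a b hne
    rw [← Set.not_nonempty_iff_eq_empty, not_iff_not, hold]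
    simp only [hpair a ha b hb, true_and]
end

section
/- For every finite graph G with twin-cover number k, the simultaneous interval number satisfies si(G) ≤ max{1, k(k−1)/2 + k}. -/
noncomputable def si {V : Type*} (G : SimpleGraph V) : ℕ :=
  sInf {d | ∃ (l r : V → ℝ) (lab : V → Set (Fin d)), IsSimRep G d l r lab}

lemma sym2_nondiag {V : Type*} {G : SimpleGraph V} {X : Set V} {x y : V}
    (hx : x ∈ X) (hy : y ∈ X) (h : G.Adj x y) :
    ¬ (s((⟨x, hx⟩ : ↥X), (⟨y, hy⟩ : ↥X)) : Sym2 ↥X).IsDiag := by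
  simp only [Sym2.mk_isDiag_iff, Subtype.mk.injEq]
  exact h.ne

lemma buildRep {V : Type*} (G : SimpleGraph V) (X : Set V) (hX : IsTwinCover G X)
    (d : ℕ) (hd1 : 1 ≤ d)
    (f : (↥X ⊕ {z : Sym2 ↥X // ¬ z.IsDiag}) ↪ Fin d)
    (φ : Set V → ℝ) (hφinj : Function.Injective φ)
    (hφ0 : ∀ S, 0 ≤ φ S) (hφ1 : ∀ S, φ S ≤ 1) :
    ∃ (l r : V → ℝ) (lab : V → Set (Fin d)), IsSimRep G d l r lab := by
  classical
  set Nc : V → Set V := fun v => G.neighborSet v ∪ {v} with hNc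
  set p : V → ℝ := fun v =>
    if (G.neighborSet v ∩ X).Nonempty then φ (Nc v) else 2 + φ (Nc v) with hp
  set lab : V → Set (Fin d) := fun v =>
    if hv : v ∈ X then
      {c | c = f (Sum.inl ⟨v, hv⟩) ∨ ∃ y, ∃ hy : y ∈ X, ∃ hadj : G.Adj v y,
        c = f (Sum.inr ⟨s(⟨v, hv⟩, ⟨y, hy⟩), sym2_nondiag hv hy hadj⟩)}
    else if (G.neighborSet v ∩ X).Nonempty then
      {c | ∃ y, ∃ hy : y ∈ X, G.Adj v y ∧ c = f (Sum.inl ⟨y, hy⟩)}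
    else {⟨0, hd1⟩} with hlab
  -- basic facts about p
  have hp01 : ∀ v, p v ∈ Set.Icc (0:ℝ) 1 ↔ (G.neighborSet v ∩ X).Nonempty := by
    intro v
    by_cases h : (G.neighborSet v ∩ X).Nonempty
    · simp only [hp, if_pos h]
      exact iff_of_true ⟨hφ0 _, hφ1 _⟩ h
    · simp only [hp, if_neg h]
      refine iff_of_false ?_ h
      intro ⟨_, h2⟩
      have := hφ0 (Nc v); linarith
  -- twins have equal neighborSet ∩ X
  have hNcX : ∀ u v, u ∉ X → v ∉ X → Nc u = Nc v →
      G.neighborSet u ∩ X = G.neighborSet v ∩ X := by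
    intro u v hu hv h
    have h2 : Nc u ∩ X = Nc v ∩ X := by rw [h]
    ext x
    constructor
    · intro ⟨hx1, hx2⟩
      have : x ∈ Nc v ∩ X := by rw [← h2]; exact ⟨Or.inl hx1, hx2⟩
      rcases this.1 with h3 | h3
      · exact ⟨h3, hx2⟩
      · exact absurd (h3 ▸ this.2) hv
    · intro ⟨hx1, hx2⟩
      have : x ∈ Nc u ∩ X := by rw [h2]; exact ⟨Or.inl hx1, hx2⟩
      rcases this.1 with h3 | h3
      · exact ⟨h3, hx2⟩
      · exact absurd (h3 ▸ this.2) hu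
  have hpinj : ∀ u v, u ∉ X → v ∉ X → (p u = p v ↔ Nc u = Nc v) := by
    intro u v hu hv
    constructor
    · intro h
      by_cases h1 : (G.neighborSet u ∩ X).Nonempty <;>
        by_cases h2 : (G.neighborSet v ∩ X).Nonempty <;>
          simp only [hp, if_pos, if_neg, h1, h2, if_true, if_false] at h
      · exact hφinj h
      · exfalso; have := hφ1 (Nc u); have := hφ0 (Nc v); linarith
      · exfalso; have := hφ1 (Nc v); have := hφ0 (Nc u); linarith
      · exact hφinj (by linarith)
    · intro h
      have h2 := hNcX u v hu hv h
      simp only [hp, h, h2]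
  -- adjacency between two non-cover vertices is exactly being twins
  have htwin : ∀ u v, u ∉ X → v ∉ X → u ≠ v → (G.Adj u v ↔ Nc u = Nc v) := by
    intro u v hu hv huv
    constructor
    · intro h
      rcases hX u v h with h1 | h1 | h1
      · exact absurd h1 hu
      · exact absurd h1 hv
      · exact h1
    · intro h
      have : u ∈ Nc v := by rw [← h]; exact Or.inr rfl
      rcases this with h1 | h1
      · exact (G.adj_symm h1)
      · exact absurd h1 huv
  refine ⟨fun v => if v ∈ X then 0 else p v, fun v => if v ∈ X then 1 else p v,
    lab, ?_, ?_⟩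
  · intro v
    by_cases hv : v ∈ X <;> simp [hv]
  · have key : ∀ u v, u ∈ X → v ∉ X → u ≠ v →
        (G.Adj u v ↔ (Set.Icc (0:ℝ) 1 ∩ Set.Icc (p v) (p v)).Nonempty ∧
          (lab u ∩ lab v).Nonempty) := by
      intro u v hu hv huv
      rw [Set.Icc_self, Set.inter_singleton_nonempty]
      constructor
      · intro h
        have hvX : (G.neighborSet v ∩ X).Nonempty := ⟨u, G.adj_symm h, hu⟩
        refine ⟨(hp01 v).2 hvX, f (Sum.inl ⟨u, hu⟩), ?_, ?_⟩
        · simp only [hlab, dif_pos hu, Set.mem_setOf_eq]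
          simp
        · simp only [hlab, dif_neg hv, if_pos hvX, Set.mem_setOf_eq]
          exact ⟨u, hu, G.adj_symm h, rfl⟩
      · rintro ⟨hint, c, hcu, hcv⟩
        have hvX : (G.neighborSet v ∩ X).Nonempty := (hp01 v).1 hint
        simp only [hlab, dif_pos hu, dif_neg hv, if_pos hvX, Set.mem_setOf_eq] at hcu hcv
        obtain ⟨y, hy, hadj, rfl⟩ := hcv
        rcases hcu with h1 | ⟨z, hz, hadj2, h1⟩
        · have := f.injective h1
          have : y = u := by simpa using Sum.inl.inj this
          exact G.adj_symm (this ▸ hadj)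
        · exact absurd (f.injective h1) (by simp)
    intro u v huv
    by_cases hu : u ∈ X <;> by_cases hv : v ∈ X <;>
      simp only [if_pos, if_neg, hu, hv, if_true, if_false]
    · -- both in X
      constructor
      · intro h
        refine ⟨⟨0, by simp⟩, f (Sum.inr ⟨s(⟨u, hu⟩, ⟨v, hv⟩), sym2_nondiag hu hv h⟩),
          ?_, ?_⟩
        · simp only [hlab, dif_pos hu, Set.mem_setOf_eq]
          exact Or.inr ⟨v, hv, h, rfl⟩
        · simp only [hlab, dif_pos hv, Set.mem_setOf_eq]
          exact Or.inr ⟨u, hu, G.adj_symm h,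
            congrArg f (congrArg Sum.inr (Subtype.ext Sym2.eq_swap))⟩
      · rintro ⟨-, c, hcu, hcv⟩
        simp only [hlab, dif_pos hu, dif_pos hv, Set.mem_setOf_eq] at hcu hcv
        rcases hcu with h1 | ⟨y, hy, hadjy, h1⟩ <;>
          rcases hcv with h2 | ⟨z, hz, hadjz, h2⟩
        · exfalso
          have := f.injective (h1 ▸ h2)
          have : u = v := by simpa using Sum.inl.inj this
          exact huv this
        · exact absurd (f.injective (h1 ▸ h2)) (by simp)
        · exact absurd (f.injective (h2 ▸ h1)) (by simp)
        · have h3 := Subtype.ext_iff.1 (Sum.inr.inj (f.injective (h1 ▸ h2)))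
          rw [Sym2.eq_iff] at h3
          rcases h3 with ⟨h4, -⟩ | ⟨h4, h5⟩
          · exfalso
            exact huv (by simpa using h4)
          · have hy' : y = v := by simpa using h5
            exact hy' ▸ hadjy
    · exact key u v hu hv huv
    · rw [G.adj_comm, Set.inter_comm (Set.Icc (p u) (p u)), Set.inter_comm (lab u)]
      exact key v u hv hu (Ne.symm huv)
    · -- both outside X
      rw [Set.Icc_self, Set.Icc_self, Set.singleton_inter_nonempty,
        Set.mem_singleton_iff, htwin u v hu hv huv, ← hpinj u v hu hv]
      constructor
      · intro h
        refine ⟨h, ?_⟩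
        have hNceq := (hpinj u v hu hv).1 h
        by_cases hc : (G.neighborSet v ∩ X).Nonempty
        · obtain ⟨y, hyN, hyX⟩ := id hc
          have hcu : (G.neighborSet u ∩ X).Nonempty := by
            rw [hNcX u v hu hv hNceq]; exact ⟨y, hyN, hyX⟩
          have hyNu : y ∈ G.neighborSet u := by
            have : y ∈ G.neighborSet u ∩ X := by
              rw [hNcX u v hu hv hNceq]; exact ⟨hyN, hyX⟩
            exact this.1
          refine ⟨f (Sum.inl ⟨y, hyX⟩), ?_, ?_⟩
          · simp only [hlab, dif_neg hu, if_pos hcu, Set.mem_setOf_eq]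
            exact ⟨y, hyX, hyNu, rfl⟩
          · simp only [hlab, dif_neg hv, if_pos hc, Set.mem_setOf_eq]
            exact ⟨y, hyX, hyN, rfl⟩
        · have hcu : ¬ (G.neighborSet u ∩ X).Nonempty := by
            rw [hNcX u v hu hv hNceq]; exact hc
          refine ⟨⟨0, hd1⟩, ?_, ?_⟩
          · simp only [hlab, dif_neg hu, if_neg hcu]; rfl
          · simp only [hlab, dif_neg hv, if_neg hc]; rfl
      · exact fun h => h.1

/-- If `G` has twin-cover number `k`, then `si(G) ≤ max {1, k(k-1)/2 + k}`. -/
theorem si_le_of_twinCover {V : Type*} [Fintype V]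
    (G : SimpleGraph V) (k : ℕ) (hk : twinCoverNumber G = k) :
    si G ≤ max 1 (k * (k - 1) / 2 + k) := by
  classical
  have hne : {k | ∃ X : Set V, IsTwinCover G X ∧ X.ncard = k}.Nonempty :=
    ⟨(Set.univ : Set V).ncard, Set.univ, fun a b _ => Or.inl (Set.mem_univ a), rfl⟩
  have hmem := Nat.sInf_mem hne
  rw [twinCoverNumber] at hk
  rw [hk] at hmem
  obtain ⟨X, hX, hXcard⟩ := hmem
  set d := max 1 (k * (k - 1) / 2 + k) with hd
  have hd1 : 1 ≤ d := le_max_left _ _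
  haveI : Fintype ↥X := Fintype.ofFinite ↥X
  have hcX : Fintype.card ↥X = k := by
    rw [← Nat.card_eq_fintype_card, Nat.card_coe_set_eq, hXcard]
  have hcardA : Fintype.card (↥X ⊕ {z : Sym2 ↥X // ¬ z.IsDiag}) ≤ Fintype.card (Fin d) := by
    rw [Fintype.card_sum, Sym2.card_subtype_not_diag, hcX, Nat.choose_two_right,
      Fintype.card_fin]
    calc k + k * (k - 1) / 2 = k * (k - 1) / 2 + k := add_comm _ _
      _ ≤ d := le_max_right _ _
  obtain ⟨f⟩ := Function.Embedding.nonempty_of_card_le hcardA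
  obtain ⟨g, hg⟩ := exists_injective_nat (Set V)
  set φ : Set V → ℝ := fun S => ((g S + 2 : ℕ) : ℝ)⁻¹ with hφ
  have hφinj : Function.Injective φ := by
    intro S T h
    simp only [hφ] at h
    rw [inv_inj, Nat.cast_inj] at h
    exact hg (by omega)
  have hφ0 : ∀ S, 0 ≤ φ S := fun S => by positivity
  have hφ1 : ∀ S, φ S ≤ 1 := by
    intro S
    rw [hφ]
    apply inv_le_one_of_one_le₀
    exact_mod_cast Nat.le_add_left 1 (g S + 1)
  obtain ⟨l, r, lab, hrep⟩ := buildRep G X hX d hd1 f φ hφinj hφ0 hφ1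
  exact Nat.sInf_le ⟨l, r, lab, hrep⟩
end

section
/- Let G be a finite graph with a module M, and let (<, S) be a consistent solution for G. Suppose there exist three vertices u < v < w such that: u and w belong to a common irreducible clique of the incompatibility graph G[M]_< (of the subgraph induced by M with the order < restricted to M), v ∉ M, and v belongs to the same class as u in S. Then v is adjacent to all vertices of M. -/
/-- A consistent solution for `G`: a strict total order `r` and a partition of
the vertices given by a coloring `c` such that every triple `u < v < w` with
`u, v` in the same class and `uw ∈ E(G)` satisfies `vw ∈ E(G)`. -/
def IsConsistentSolution {V α : Type*} (G : SimpleGraph V)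
    (r : V → V → Prop) (c : V → α) : Prop :=
  IsStrictTotalOrder V r ∧
    ∀ u v w, r u v → r v w → c u = c v → G.Adj u w → G.Adj v w

def incompGraph {V : Type*} (G : SimpleGraph V) (r : V → V → Prop) :
    SimpleGraph V :=
  SimpleGraph.fromRel (fun u v => ∃ w, r u v ∧ r v w ∧ G.Adj u w ∧ ¬ G.Adj v w)

def IsIrreducibleClique {V : Type*} (G : SimpleGraph V) (r : V → V → Prop)
    (C : Finset V) : Prop :=
  (incompGraph G r).IsClique (C : Set V) ∧
    ∀ v ∈ C, ∃ w, r v w ∧ ¬ G.Adj v w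

/-- If `u < v < w`, where `u` and `w` lie in an irreducible clique of the
incompatibility graph of `G[M]`, `v ∉ M` and `v` is in the same class as `u`,
then `v` is adjacent to all vertices of `M`. -/
theorem adj_of_between_irreducibleClique {V α : Type*} [Fintype V]
    (G : SimpleGraph V) (M : Set V) (hmod : IsModule G M)
    (r : V → V → Prop) (c : V → α) (hsol : IsConsistentSolution G r c)
    (C : Finset ↥M)
    (hC : IsIrreducibleClique (G.induce M) (fun a b => r a.1 b.1) C)
    (u w : ↥M) (hu : u ∈ C) (hw : w ∈ C)
    (v : V) (hvM : v ∉ M) (huv : r u.1 v) (hvw : r v w.1)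
    (hclass : c u.1 = c v) :
    ∀ x ∈ M, G.Adj v x := by
  obtain ⟨hsto, hcons⟩ := hsol
  have htrans : ∀ a b d, r a b → r b d → r a d := fun a b d => hsto.trans a b d
  have hirr : ∀ a, ¬ r a a := hsto.irrefl
  have huw : r u.1 w.1 := htrans _ _ _ huv hvw
  have hne : u ≠ w := by
    rintro rfl
    exact hirr _ huw
  have hadj := hC.1 (Finset.mem_coe.mpr hu) (Finset.mem_coe.mpr hw) hne
  rw [incompGraph, SimpleGraph.fromRel_adj] at hadj
  obtain ⟨-, h | h⟩ := hadj
  · obtain ⟨x, -, hwx, hux, -⟩ := h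
    have hGux : G.Adj u.1 x.1 := hux
    have hvx : r v x.1 := htrans _ _ _ hvw hwx
    have hGvx : G.Adj v x.1 := hcons u.1 v x.1 huv hvx hclass hGux
    rcases hmod v hvM with h' | h'
    · exact h'
    · exact absurd hGvx (h' x.1 x.2)
  · obtain ⟨x, hwu, -⟩ := h
    exact absurd (htrans _ _ _ huw hwu) (hirr _)
end

section
/- Let G be a finite graph and M a module of G having a neighbor v (a vertex outside M adjacent to all of M). In every consistent solution (<, S) for G, if v belongs to the same class of S as a vertex u that belongs to an irreducible clique of the incompatibility graph G[M]_< (of the subgraph induced by M with the order < restricted to M), then u < v. -/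
/-- Let `M` be a module of `G` with a neighbor `v` (a vertex outside `M`
adjacent to all of `M`). In every consistent solution, if `v` is in the same
class as a vertex `u` of an irreducible clique of the incompatibility graph of
`G[M]`, then `u < v`. -/
theorem neighbor_of_module_gt {V α : Type*} [Fintype V]
    (G : SimpleGraph V) (M : Set V) (hmod : IsModule G M)
    (v : V) (hvM : v ∉ M) (hnbr : ∀ x ∈ M, G.Adj v x)
    (r : V → V → Prop) (c : V → α) (hsol : IsConsistentSolution G r c)
    (C : Finset ↥M)
    (hC : IsIrreducibleClique (G.induce M) (fun a b => r a.1 b.1) C)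
    (u : ↥M) (hu : u ∈ C) (hclass : c u.1 = c v) :
    r u.1 v := by
  obtain ⟨hord, hcons⟩ := hsol
  obtain ⟨w, hrw, hnadj⟩ := hC.2 u hu
  have hne : u.1 ≠ v := fun h => hvM (h ▸ u.2)
  rcases (show r u.1 v ∨ u.1 = v ∨ r v u.1 by have := hord.trichotomous u.1 v; tauto) with h | h | h
  · exact h
  · exact absurd h hne
  · exfalso
    exact hnadj (hcons v u.1 w.1 h hrw hclass.symm (hnbr w.1 w.2))
end

section
/- Let ℓ be a natural number, G a finite graph with a module M, H a graph of thinness ℓ, and G' the graph obtained by replacing M with H in G. Let (<, S) be a consistent solution for G with k classes, and suppose there exists an irreducible clique C of the incompatibility graph G[M]_< of size ℓ. If no vertex of V(G)\M that lies, according to <, strictly between two vertices of C belongs to the same class of S as some vertex of C, then there exists a consistent solution for G' with k classes in which all the vertices of V(H) are consecutive in the order. -/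
/-- The graph obtained by replacing a module `M` of `G` by a graph `H`:
vertices are `(V(G) \ M) ⊕ V(H)`; edges are those of `G` outside `M`, those of
`H`, and all edges between `V(H)` and the neighbors of `M` in `G`. -/
def replaceModule {V W : Type*} (G : SimpleGraph V) (M : Set V)
    (H : SimpleGraph W) : SimpleGraph ({x : V // x ∉ M} ⊕ W) where
  Adj x y :=
    match x, y with
    | .inl a, .inl b => G.Adj a.1 b.1
    | .inl a, .inr _ => ∀ m ∈ M, G.Adj a.1 m
    | .inr _, .inl b => ∀ m ∈ M, G.Adj b.1 m
    | .inr a, .inr b => H.Adj a b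
  symm := by
    constructor
    rintro (a | a) (b | b) h
    · exact h.symm
    · exact h
    · exact h
    · exact h.symm
  loopless := by
    constructor
    rintro (a | a) h
    · exact G.irrefl h
    · exact H.irrefl h

/-- If `(r, c)` is a consistent solution for `G` in `k` classes, there is an
irreducible clique `C` of the incompatibility graph of `G[M]` of size
`ℓ = thin(H)`, and no vertex outside `M` lying between two vertices of `C`
shares its class with a vertex of `C`, then replacing the module `M` by `H`
admits a consistent solution in `k` classes in which the vertices of `H` are
consecutive. -/
theorem replaceModule_consistent_consecutive {V W : Type*}
    [Fintype V] [Fintype W] (G : SimpleGraph V) (M : Set V)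
    (hmod : IsModule G M) (H : SimpleGraph W) (ℓ : ℕ) (hH : thinness H = ℓ)
    (k : ℕ) (r : V → V → Prop) (hr : IsStrictTotalOrder V r) (c : V → Fin k)
    (hcons : ∀ u v w, r u v → r v w → c u = c v → G.Adj u w → G.Adj v w)
    (C : Finset ↥M)
    (hC : IsIrreducibleClique (G.induce M) (fun a b => r a.1 b.1) C)
    (hCcard : C.card = ℓ)
    (hbetween : ∀ v : V, v ∉ M →
      (∃ a ∈ C, ∃ b ∈ C, r a.1 v ∧ r v b.1) → ∀ x ∈ C, c v ≠ c x.1) :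
    ∃ (r' : ({x : V // x ∉ M} ⊕ W) → ({x : V // x ∉ M} ⊕ W) → Prop)
      (_ : IsStrictTotalOrder ({x : V // x ∉ M} ⊕ W) r')
      (c' : ({x : V // x ∉ M} ⊕ W) → Fin k),
      (∀ u v w, r' u v → r' v w → c' u = c' v →
        (replaceModule G M H).Adj u w → (replaceModule G M H).Adj v w) ∧
      (∀ (a b : W) (y : {x : V // x ∉ M} ⊕ W),
        r' (.inr a) y → r' y (.inr b) → ∃ z : W, y = .inr z) := by
  classical
  haveI := hr
  -- extract a consistent solution for `H` with `ℓ` classes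
  obtain ⟨rH, hrH, cH, hconsH⟩ :
      ∃ (rH : W → W → Prop) (_ : IsStrictTotalOrder W rH) (cH : W → Fin ℓ),
        ∀ u v w, rH u v → rH v w → cH u = cH v → H.Adj u w → H.Adj v w := by
    have hne : {k | ∃ (r : W → W → Prop) (_ : IsStrictTotalOrder W r) (c : W → Fin k),
        ∀ u v w, r u v → r v w → c u = c v → H.Adj u w → H.Adj v w}.Nonempty := by
      refine ⟨Fintype.card W, fun a b => Fintype.equivFin W a < Fintype.equivFin W b,
        ?_, Fintype.equivFin W, ?_⟩
      · refine { trichotomous := ?_, irrefl := ?_, trans := ?_ }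
        · intro a b
          rcases lt_trichotomy (Fintype.equivFin W a) (Fintype.equivFin W b) with h|h|h
          · exact fun h1 _ => (h1 h).elim
          · exact fun _ _ => (Fintype.equivFin W).injective h
          · exact fun _ h2 => (h2 h).elim
        · intro a; exact lt_irrefl _
        · intro a b c h1 h2; exact lt_trans h1 h2
      · intro u v w huv _ hc _
        rw [hc] at huv
        exact absurd huv (lt_irrefl _)
    have h2 : thinness H ∈ {k | ∃ (r : W → W → Prop) (_ : IsStrictTotalOrder W r)
        (c : W → Fin k), ∀ u v w, r u v → r v w → c u = c v → H.Adj u w → H.Adj v w} :=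
      Nat.sInf_mem hne
    rwa [hH] at h2
  haveI := hrH
  by_cases hW : Nonempty W
  · -- main case: W nonempty
    have hℓpos : 0 < ℓ := by
      obtain ⟨w⟩ := hW
      exact (cH w).pos
    have hCne : C.Nonempty := Finset.card_pos.mp (by rw [hCcard]; exact hℓpos)
    haveI hSTO : IsStrictTotalOrder ↥M (fun a b : ↥M => r a.1 b.1) := by
      refine { trichotomous := ?_, irrefl := ?_, trans := ?_ }
      · intro a b
        rcases trichotomous_of r a.1 b.1 with h|h|h
        · exact fun h1 _ => (h1 h).elim
        · exact fun _ _ => Subtype.ext h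
        · exact fun _ h2 => (h2 h).elim
      · intro a
        exact irrefl_of r a.1
      · intro a b x h1 h2
        exact trans_of r h1 h2
    letI : LinearOrder ↥M := linearOrderOfSTO (fun a b : ↥M => r a.1 b.1)
    set t₀ := C.max' hCne with ht₀
    have htC : t₀ ∈ C := C.max'_mem hCne
    have hmax : ∀ x ∈ C, x = t₀ ∨ r x.1 t₀.1 := by
      intro x hx
      rcases lt_or_eq_of_le (C.le_max' x hx) with h|h
      · exact Or.inr h
      · exact Or.inl h
    let E : Fin C.card ≃ ↥C := C.equivFin.symm
    let X : W → ↥C := fun z => E (Fin.cast hCcard.symm (cH z))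
    -- `c` is injective on `C`
    have hinj : ∀ x ∈ C, ∀ y ∈ C, c x.1 = c y.1 → x = y := by
      intro x hx y hy hcxy
      by_contra hne
      have hadj := hC.1 (Finset.mem_coe.mpr hx) (Finset.mem_coe.mpr hy) hne
      rw [incompGraph, SimpleGraph.fromRel_adj] at hadj
      obtain ⟨-, h | h⟩ := hadj
      · obtain ⟨w', h1, h2, h3, h4⟩ := h
        exact h4 (hcons x.1 y.1 w'.1 h1 h2 hcxy h3)
      · obtain ⟨w', h1, h2, h3, h4⟩ := h
        exact h4 (hcons y.1 x.1 w'.1 h1 h2 hcxy.symm h3)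
    have hXinj : ∀ z1 z2 : W, c (X z1).1.1 = c (X z2).1.1 → cH z1 = cH z2 := by
      intro z1 z2 h
      have h2 : X z1 = X z2 := Subtype.ext (hinj _ (X z1).2 _ (X z2).2 h)
      have h3 := E.injective h2
      have h4 : (cH z1).val = (cH z2).val := by
        simpa using congrArg Fin.val h3
      exact Fin.ext h4
    have hkey : ∀ (a : {x : V // x ∉ M}) (z : W), r a.1 t₀.1 →
        c a.1 = c (X z).1.1 → r a.1 (X z).1.1 := by
      intro a z h1 hcv
      rcases trichotomous_of r a.1 (X z).1.1 with h|h|h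
      · exact h
      · exact absurd (X z).1.2 (h ▸ a.2)
      · exact absurd hcv
          (hbetween a.1 a.2 ⟨(X z).1, (X z).2, t₀, htC, h, h1⟩ (X z).1 (X z).2)
    refine ⟨fun x y => match x, y with
      | .inl a, .inl b => r a.1 b.1
      | .inl a, .inr _ => r a.1 t₀.1
      | .inr _, .inl b => r t₀.1 b.1
      | .inr z1, .inr z2 => rH z1 z2, ?_, fun x => match x with
      | .inl a => c a.1
      | .inr z => c (X z).1.1, ?_, ?_⟩
    · refine { trichotomous := ?_, irrefl := ?_, trans := ?_ }
      · rintro (a|z1) (b|z2)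
        · rcases trichotomous_of r a.1 b.1 with h|h|h
          · exact fun h1 _ => (h1 h).elim
          · exact fun _ _ => congrArg Sum.inl (Subtype.ext h)
          · exact fun _ h2 => (h2 h).elim
        · rcases trichotomous_of r a.1 t₀.1 with h|h|h
          · exact fun h1 _ => (h1 h).elim
          · exact absurd t₀.2 (h ▸ a.2)
          · exact fun _ h2 => (h2 h).elim
        · rcases trichotomous_of r t₀.1 b.1 with h|h|h
          · exact fun h1 _ => (h1 h).elim
          · exact absurd t₀.2 (h ▸ b.2)
          · exact fun _ h2 => (h2 h).elim
        · rcases trichotomous_of rH z1 z2 with h|h|h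
          · exact fun h1 _ => (h1 h).elim
          · exact fun _ _ => congrArg Sum.inr h
          · exact fun _ h2 => (h2 h).elim
      · rintro (a|z) h
        · exact irrefl_of r a.1 h
        · exact irrefl_of rH z h
      · rintro (a|z1) (b|z2) (d|z3) h1 h2
        · exact trans_of r h1 h2
        · exact trans_of r h1 h2
        · exact trans_of r h1 h2
        · exact h1
        · exact trans_of r h1 h2
        · exact ((irrefl_of r t₀.1) (trans_of r h1 h2)).elim
        · exact h2
        · exact trans_of rH h1 h2
    · rintro (a|z1) (b|z2) (d|z3) h1 h2 hcv hadj
      · exact hcons a.1 b.1 d.1 h1 h2 hcv hadj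
      · -- inl, inl, inr
        have hbt := hcons a.1 b.1 t₀.1 h1 h2 hcv (hadj t₀.1 t₀.2)
        intro m hm
        rcases hmod b.1 b.2 with h|h
        · exact h m hm
        · exact absurd hbt (h t₀.1 t₀.2)
      · -- inl, inr, inl
        have hax : r a.1 (X z2).1.1 := hkey a z2 h1 hcv
        have hxd : r (X z2).1.1 d.1 := by
          rcases hmax (X z2).1 (X z2).2 with h|h
          · rw [h]; exact h2
          · exact trans_of r h h2
        have hGxd := hcons a.1 (X z2).1.1 d.1 hax hxd hcv hadj
        intro m hm
        rcases hmod d.1 d.2 with h|h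
        · exact h m hm
        · exact absurd hGxd.symm (h (X z2).1.1 (X z2).1.2)
      · -- inl, inr, inr : impossible by irreducibility
        exfalso
        have hax : r a.1 (X z2).1.1 := hkey a z2 h1 hcv
        obtain ⟨w', hw1, hw2⟩ := hC.2 (X z2).1 (X z2).2
        exact hw2 (hcons a.1 (X z2).1.1 w'.1 hax hw1 hcv (hadj w'.1 w'.2))
      · -- inr, inl, inl
        have hxb : r (X z1).1.1 b.1 := by
          rcases hmax (X z1).1 (X z1).2 with h|h
          · rw [h]; exact h1
          · exact trans_of r h h1
        exact hcons (X z1).1.1 b.1 d.1 hxb h2 hcv (hadj (X z1).1.1 (X z1).1.2).symm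
      · -- inr, inl, inr : impossible
        exact ((irrefl_of r t₀.1) (trans_of r h1 h2)).elim
      · -- inr, inr, inl
        exact hadj
      · -- inr, inr, inr
        exact hconsH z1 z2 z3 h1 h2 (hXinj z1 z2 hcv) hadj
    · rintro a b (v|z) h1 h2
      · exact ((irrefl_of r t₀.1) (trans_of r h1 h2)).elim
      · exact ⟨z, rfl⟩
  · -- W empty
    haveI : IsEmpty W := not_nonempty_iff.mp hW
    refine ⟨fun x y => match x, y with
      | .inl a, .inl b => r a.1 b.1
      | _, _ => False, ?_, fun x => match x with
      | .inl a => c a.1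
      | .inr z => isEmptyElim z, ?_, ?_⟩
    · refine { trichotomous := ?_, irrefl := ?_, trans := ?_ }
      · rintro (a|z) (b|z2)
        · rcases trichotomous_of r a.1 b.1 with h|h|h
          · exact fun h1 _ => (h1 h).elim
          · exact fun _ _ => congrArg Sum.inl (Subtype.ext h)
          · exact fun _ h2 => (h2 h).elim
        · exact isEmptyElim z2
        · exact isEmptyElim z
        · exact isEmptyElim z
      · rintro (a|z) h
        · exact irrefl_of r a.1 h
        · exact isEmptyElim z
      · rintro (a|z) (b|z) (d|z) h1 h2
        · exact trans_of r h1 h2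
        all_goals exact isEmptyElim z
    · rintro (a|z) (b|z) (d|z) h1 h2 hcv hadj
      · exact hcons a.1 b.1 d.1 h1 h2 hcv hadj
      all_goals exact isEmptyElim z
    · intro a b y
      exact isEmptyElim a
end

section
/- Define the family of graphs H_n by: H_0 is the one-vertex graph, and for every n ≥ 0, H_{n+1} is obtained from a bipartite claw by substituting each of its three leaves by a copy of H_n. Then for every n ≥ 0, the linear mim-width of H_n equals n, i.e. lmimw(H_n) = n. -/
/-- Vertices of the graph family `H_n`: `H_0` has one vertex; `H_{n+1}` is
built from the bipartite claw (center `.inl`, middle vertices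
`.inr (i, .inl ())`) by substituting the `i`-th leaf by a copy of `H_n`
(vertices `.inr (i, .inr v)`). -/
def HVert : ℕ → Type
  | 0 => Unit
  | n + 1 => Unit ⊕ (Fin 3 × (Unit ⊕ HVert n))

/-- Adjacency of `H_n` (see `HVert`): in `H_{n+1}`, the center is adjacent to
the three middle vertices, the `i`-th middle vertex is adjacent to all
vertices of the `i`-th copy of `H_n` (substituted for the `i`-th leaf of the
bipartite claw), and each copy of `H_n` keeps its own edges. -/
def HAdj : (n : ℕ) → HVert n → HVert n → Prop
  | 0, _, _ => False
  | n + 1, x, y =>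
    match x, y with
    | .inl _, .inl _ => False
    | .inl _, .inr (_, .inl _) => True
    | .inl _, .inr (_, .inr _) => False
    | .inr (_, .inl _), .inl _ => True
    | .inr (_, .inr _), .inl _ => False
    | .inr (_, .inl _), .inr (_, .inl _) => False
    | .inr (i, .inl _), .inr (j, .inr _) => i = j
    | .inr (i, .inr _), .inr (j, .inl _) => i = j
    | .inr (i, .inr v), .inr (j, .inr w) => i = j ∧ HAdj n v w

theorem hAdj_symm : ∀ (n : ℕ) (x y : HVert n), HAdj n x y → HAdj n y x := by
  intro n
  induction n with
  | zero => intro x y h; exact h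
  | succ n ih =>
    rintro (x | ⟨i, (u | v)⟩) (y | ⟨j, (u' | w)⟩) h <;>
      simp_all [HAdj]

theorem hAdj_irrefl : ∀ (n : ℕ) (x : HVert n), ¬ HAdj n x x := by
  intro n
  induction n with
  | zero => intro x h; exact h
  | succ n ih =>
    rintro (x | ⟨i, (u | v)⟩) h <;> simp_all [HAdj]

/-- The graph family `H_n`: `H_0` is the one-vertex graph and `H_{n+1}` is
obtained from the bipartite claw by substituting each leaf by a copy of
`H_n`. -/
def HGraph (n : ℕ) : SimpleGraph (HVert n) where
  Adj := HAdj n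
  symm := ⟨fun _ _ h => hAdj_symm n _ _ h⟩
  loopless := ⟨fun x h => hAdj_irrefl n x h⟩

/-- An induced matching of the bipartite graph of the cut `A | Aᶜ` of `G`
(whose edges are the edges of `G` crossing the cut), given as a finite set of
crossing edges that pairwise share no endpoint and are joined by no edge. -/
def IsCrossingInducedMatching {V : Type*} (G : SimpleGraph V) (A : Set V)
    (P : Finset (V × V)) : Prop :=
  (∀ p ∈ P, p.1 ∈ A ∧ p.2 ∉ A ∧ G.Adj p.1 p.2) ∧
  (∀ p ∈ P, ∀ q ∈ P, p ≠ q →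
    p.1 ≠ q.1 ∧ p.2 ≠ q.2 ∧ ¬ G.Adj p.1 q.2 ∧ ¬ G.Adj q.1 p.2)

/-- The mim of the cut `A | Aᶜ`: the maximum size of an induced matching of
the bipartite graph of the cut. -/
noncomputable def cutMim {V : Type*} (G : SimpleGraph V) (A : Set V) : ℕ :=
  sSup {m | ∃ P : Finset (V × V), IsCrossingInducedMatching G A P ∧ P.card = m}

/-- The cuts of a linear layout (given by a strict total order) are exactly
its initial segments. -/
def IsInitialSegment {V : Type*} (r : V → V → Prop) (A : Set V) : Prop :=
  ∀ a ∈ A, ∀ b, r b a → b ∈ A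

/-- The mim-width of a linear layout: the maximum mim over its cuts. -/
noncomputable def layoutMimWidth {V : Type*} (G : SimpleGraph V)
    (r : V → V → Prop) : ℕ :=
  sSup {m | ∃ A : Set V, IsInitialSegment r A ∧ cutMim G A = m}

/-- The linear mim-width: the minimum mim-width over all linear layouts. -/
noncomputable def linMimWidth {V : Type*} (G : SimpleGraph V) : ℕ :=
  sInf {m | ∃ r : V → V → Prop, IsStrictTotalOrder V r ∧
    layoutMimWidth G r = m}
section Infra

instance fintypeHVert : ∀ n, Fintype (HVert n)
  | 0 => inferInstanceAs (Fintype Unit)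
  | n + 1 =>
    letI := fintypeHVert n
    inferInstanceAs (Fintype (Unit ⊕ (Fin 3 × (Unit ⊕ HVert n))))

instance inhabitedHVert : ∀ n, Inhabited (HVert n)
  | 0 => inferInstanceAs (Inhabited Unit)
  | n + 1 => ⟨Sum.inl ()⟩

variable {V : Type*} [Fintype V] {G : SimpleGraph V} {A : Set V}

omit [Fintype V] in
theorem empty_matching (G : SimpleGraph V) (A : Set V) :
    IsCrossingInducedMatching G A (∅ : Finset (V × V)) := by
  constructor <;> intro p hp <;> simp at hp

omit [Fintype V] in
theorem cutMim_le {k : ℕ}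
    (h : ∀ P : Finset (V × V), IsCrossingInducedMatching G A P → P.card ≤ k) :
    cutMim G A ≤ k := by
  refine csSup_le ?_ ?_
  · exact ⟨0, ∅, empty_matching G A, rfl⟩
  · rintro m ⟨P, hP, rfl⟩
    exact h P hP

theorem le_cutMim {P : Finset (V × V)} (h : IsCrossingInducedMatching G A P) :
    P.card ≤ cutMim G A := by
  refine le_csSup ?_ ⟨P, h, rfl⟩
  refine ⟨Fintype.card (V × V), ?_⟩
  rintro m ⟨Q, _, rfl⟩
  exact Finset.card_le_univ Q

omit [Fintype V] in
theorem layoutMimWidth_le {r : V → V → Prop} {k : ℕ}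
    (h : ∀ A : Set V, IsInitialSegment r A →
      ∀ P : Finset (V × V), IsCrossingInducedMatching G A P → P.card ≤ k) :
    layoutMimWidth G r ≤ k := by
  refine csSup_le ?_ ?_
  · exact ⟨cutMim G ∅, ∅, fun a ha => absurd ha (by simp), rfl⟩
  · rintro m ⟨A, hA, rfl⟩
    exact cutMim_le (h A hA)

theorem le_layoutMimWidth {r : V → V → Prop} {A : Set V}
    (hA : IsInitialSegment r A) : cutMim G A ≤ layoutMimWidth G r := by
  have hb : BddAbove {m | ∃ B : Set V, IsInitialSegment r B ∧ cutMim G B = m} := by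
    refine ⟨Fintype.card (V × V), ?_⟩
    rintro m ⟨B, _, rfl⟩
    exact cutMim_le fun P _ => Finset.card_le_univ P
  have hmem : cutMim G A ∈ {m | ∃ B : Set V, IsInitialSegment r B ∧ cutMim G B = m} :=
    ⟨A, hA, rfl⟩
  exact le_csSup hb hmem

omit [Fintype V] in
theorem linMimWidth_le {r : V → V → Prop} (hr : IsStrictTotalOrder V r) {k : ℕ}
    (h : layoutMimWidth G r ≤ k) : linMimWidth G ≤ k := by
  have hmem : layoutMimWidth G r ∈
      {m | ∃ s : V → V → Prop, IsStrictTotalOrder V s ∧ layoutMimWidth G s = m} :=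
    ⟨r, hr, rfl⟩
  exact (Nat.sInf_le hmem).trans h

omit [Fintype V] in
theorem le_linMimWidth {k : ℕ} {r₀ : V → V → Prop}
    (hr₀ : IsStrictTotalOrder V r₀)
    (h : ∀ r : V → V → Prop, IsStrictTotalOrder V r → k ≤ layoutMimWidth G r) :
    k ≤ linMimWidth G := by
  have hne : Set.Nonempty {m | ∃ s : V → V → Prop, IsStrictTotalOrder V s ∧
      layoutMimWidth G s = m} := ⟨layoutMimWidth G r₀, r₀, hr₀, rfl⟩
  refine le_csInf hne ?_
  rintro m ⟨r, hr, rfl⟩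
  exact h r hr

end Infra
section Verts

variable {n : ℕ}

/-- The center of `H_{n+1}`. -/
def ctr (n : ℕ) : HVert (n + 1) := Sum.inl ()

/-- The `j`-th middle vertex of `H_{n+1}`. -/
def mid (n : ℕ) (j : Fin 3) : HVert (n + 1) := Sum.inr (j, Sum.inl ())

/-- The embedding of the `j`-th copy of `H_n` into `H_{n+1}`. -/
def emb (n : ℕ) (j : Fin 3) (v : HVert n) : HVert (n + 1) := Sum.inr (j, Sum.inr v)

theorem emb_injective (n : ℕ) (j : Fin 3) : Function.Injective (emb n j) := by
  intro a b h
  exact congrArg (fun x : HVert (n + 1) =>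
    match x with
    | Sum.inr (_, Sum.inr v) => v
    | _ => a) h

@[simp] theorem adj_ctr_mid (j : Fin 3) : HAdj (n + 1) (ctr n) (mid n j) := by
  simp [HAdj, ctr, mid]

@[simp] theorem adj_mid_ctr (j : Fin 3) : HAdj (n + 1) (mid n j) (ctr n) := by
  simp [HAdj, ctr, mid]

@[simp] theorem adj_mid_emb (j : Fin 3) (v : HVert n) :
    HAdj (n + 1) (mid n j) (emb n j v) := by
  simp [HAdj, mid, emb]

@[simp] theorem adj_emb_mid (j : Fin 3) (v : HVert n) :
    HAdj (n + 1) (emb n j v) (mid n j) := by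
  simp [HAdj, mid, emb]

@[simp] theorem adj_emb_emb (j : Fin 3) (v w : HVert n) :
    HAdj (n + 1) (emb n j v) (emb n j w) ↔ HAdj n v w := by
  simp [HAdj, emb]

@[simp] theorem not_adj_ctr_ctr : ¬ HAdj (n + 1) (ctr n) (ctr n) := by
  simp [HAdj, ctr]

@[simp] theorem not_adj_ctr_emb (j : Fin 3) (v : HVert n) :
    ¬ HAdj (n + 1) (ctr n) (emb n j v) := by
  simp [HAdj, ctr, emb]

@[simp] theorem not_adj_emb_ctr (j : Fin 3) (v : HVert n) :
    ¬ HAdj (n + 1) (emb n j v) (ctr n) := by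
  simp [HAdj, ctr, emb]

@[simp] theorem not_adj_mid_mid (j k : Fin 3) :
    ¬ HAdj (n + 1) (mid n j) (mid n k) := by
  simp [HAdj, mid]

theorem adj_mid_emb_iff (j k : Fin 3) (v : HVert n) :
    HAdj (n + 1) (mid n j) (emb n k v) ↔ j = k := by
  simp [HAdj, mid, emb]

theorem adj_emb_mid_iff (j k : Fin 3) (v : HVert n) :
    HAdj (n + 1) (emb n j v) (mid n k) ↔ j = k := by
  simp [HAdj, mid, emb]

theorem adj_emb_emb_iff (j k : Fin 3) (v w : HVert n) :
    HAdj (n + 1) (emb n j v) (emb n k w) ↔ j = k ∧ HAdj n v w := by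
  simp [HAdj, emb]

/-- Every vertex of `H_{n+1}` is the center, a middle vertex, or a copy vertex. -/
theorem hvert_cases (x : HVert (n + 1)) :
    x = ctr n ∨ (∃ j, x = mid n j) ∨ ∃ j v, x = emb n j v := by
  rcases x with u | ⟨j, u | v⟩
  · exact Or.inl rfl
  · exact Or.inr (Or.inl ⟨j, rfl⟩)
  · exact Or.inr (Or.inr ⟨j, v, rfl⟩)

end Verts
section UpperOrder

variable {n : ℕ}

/-- Block index realizing the layout `copy₀ < mid₀ < ctr < copy₁ < mid₁ < copy₂ < mid₂`. -/
def blk {n : ℕ} : HVert (n + 1) → ℕ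
  | Sum.inl _ => 2
  | Sum.inr (j, Sum.inl _) => 3 * j.val + 1
  | Sum.inr (j, Sum.inr _) => 3 * j.val

@[simp] theorem blk_ctr : blk (ctr n) = 2 := rfl
@[simp] theorem blk_mid (j : Fin 3) : blk (mid n j) = 3 * j.val + 1 := rfl
@[simp] theorem blk_emb (j : Fin 3) (v : HVert n) : blk (emb n j v) = 3 * j.val := rfl

/-- The auxiliary within-copy relation. -/
def rest {n : ℕ} (rn : HVert n → HVert n → Prop) : HVert (n + 1) → HVert (n + 1) → Prop
  | Sum.inr (_, Sum.inr v), Sum.inr (_, Sum.inr w) => rn v w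
  | _, _ => False

/-- The layout of `H_{n+1}` built from a layout of `H_n`. -/
def rUp {n : ℕ} (rn : HVert n → HVert n → Prop) (x y : HVert (n + 1)) : Prop :=
  blk x < blk y ∨ (blk x = blk y ∧ rest rn x y)

theorem rUp_emb_emb {rn : HVert n → HVert n → Prop} (j : Fin 3) (v w : HVert n) :
    rUp rn (emb n j v) (emb n j w) ↔ rn v w := by
  simp [rUp, rest, emb, blk]

theorem rUp_of_blk_lt {rn : HVert n → HVert n → Prop} {x y : HVert (n + 1)}
    (h : blk x < blk y) : rUp rn x y := Or.inl h

theorem blk_eq_cases {x y : HVert (n + 1)} (h : blk x = blk y) :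
    x = y ∨ ∃ j v w, x = emb n j v ∧ y = emb n j w := by
  rcases x with u | ⟨j, u | v⟩ <;> rcases y with u' | ⟨k, u' | w⟩ <;>
    simp only [blk] at h <;>
    first
      | (left; rfl)
      | (exact absurd h (by omega))
      | · have hjk : j = k := by
            have := j.isLt; have := k.isLt
            exact Fin.ext (by omega)
          subst hjk
          first
            | (left; rfl)
            | (right; exact ⟨j, v, w, rfl, rfl⟩)

theorem rUp_STO {rn : HVert n → HVert n → Prop} (hrn : IsStrictTotalOrder (HVert n) rn) :
    IsStrictTotalOrder (HVert (n + 1)) (rUp rn) := by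
  refine { trichotomous := ?_, irrefl := ?_, trans := ?_ }
  · -- trichotomous
    intro x y
    suffices H : rUp rn x y ∨ x = y ∨ rUp rn y x from
      fun h1 h2 => H.elim (absurd · h1) (·.elim id (absurd · h2))
    rcases Nat.lt_trichotomy (blk x) (blk y) with h | h | h
    · exact Or.inl (Or.inl h)
    · rcases blk_eq_cases h with rfl | ⟨j, v, w, rfl, rfl⟩
      · exact Or.inr (Or.inl rfl)
      · rcases (haveI := hrn; trichotomous_of rn v w) with hv | hv | hv
        · exact Or.inl ((rUp_emb_emb j v w).2 hv)
        · exact Or.inr (Or.inl (by rw [hv]))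
        · exact Or.inr (Or.inr ((rUp_emb_emb j w v).2 hv))
    · exact Or.inr (Or.inr (Or.inl h))
  · -- irrefl
    intro x h
    rcases h with h | ⟨-, h⟩
    · omega
    · rcases x with u | ⟨j, u | v⟩ <;> simp [rest] at h
      exact hrn.irrefl v h
  · -- trans
    rintro x y z (h1 | ⟨e1, h1⟩) (h2 | ⟨e2, h2⟩)
    · exact Or.inl (h1.trans h2)
    · exact Or.inl (e2 ▸ h1)
    · exact Or.inl (e1 ▸ h2)
    · refine Or.inr ⟨e1.trans e2, ?_⟩
      rcases x with u | ⟨j, u | v⟩ <;> rcases y with u' | ⟨k, u' | w⟩ <;>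
          simp [rest] at h1 ⊢ <;>
        rcases z with u'' | ⟨l, u'' | s⟩ <;> simp [rest] at h2 ⊢
      exact hrn.trans _ _ _ h1 h2

end UpperOrder
section UpperBound

variable {n : ℕ}

@[simp] theorem hGraph_adj {k : ℕ} (x y : HVert k) :
    (HGraph k).Adj x y ↔ HAdj k x y := Iff.rfl

theorem ctr_ne_mid (j : Fin 3) : ctr n ≠ mid n j := by
  intro h
  have := congrArg blk h
  simp only [blk_ctr, blk_mid, blk_emb] at this
  omega

theorem ctr_ne_emb (j : Fin 3) (v : HVert n) : ctr n ≠ emb n j v := by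
  intro h
  have := congrArg blk h
  simp only [blk_ctr, blk_mid, blk_emb] at this
  omega

theorem mid_ne_emb (j k : Fin 3) (v : HVert n) : mid n j ≠ emb n k v := by
  intro h
  have := congrArg blk h
  simp only [blk_ctr, blk_mid, blk_emb] at this
  omega

theorem mid_inj {j k : Fin 3} (h : mid n j = mid n k) : j = k := by
  have := congrArg blk h
  simp only [blk_mid] at this
  have := j.isLt; have := k.isLt
  exact Fin.ext (by omega)

theorem emb_eq_emb {j k : Fin 3} {v w : HVert n} (h : emb n j v = emb n k w) :
    j = k ∧ v = w := by
  have hb := congrArg blk h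
  simp only [blk_emb] at hb
  have : j = k := by
    have := j.isLt; have := k.isLt
    exact Fin.ext (by omega)
  subst this
  exact ⟨rfl, emb_injective n j h⟩

/-- Projection back from the copies; junk elsewhere. -/
def proj {n : ℕ} : HVert (n + 1) → HVert n
  | Sum.inr (_, Sum.inr v) => v
  | _ => default

@[simp] theorem proj_emb (j : Fin 3) (v : HVert n) : proj (emb n j v) = v := rfl

theorem upper_step {rn : HVert n → HVert n → Prop}
    (W : ∀ A : Set (HVert n), IsInitialSegment rn A →
      ∀ P : Finset (HVert n × HVert n),
        IsCrossingInducedMatching (HGraph n) A P → P.card ≤ n) :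
    ∀ A : Set (HVert (n + 1)), IsInitialSegment (rUp rn) A →
      ∀ P : Finset (HVert (n + 1) × HVert (n + 1)),
        IsCrossingInducedMatching (HGraph (n + 1)) A P → P.card ≤ n + 1 := by
  classical
  intro A hA P hP
  obtain ⟨h1, h2⟩ := hP
  have memA : ∀ {x y : HVert (n + 1)}, x ∈ A → blk y < blk x → y ∈ A :=
    fun hx h => hA _ hx _ (rUp_of_blk_lt h)
  -- the possible forms of a crossing edge touching a middle vertex
  have touch_form : ∀ p ∈ P, (∃ j, p.1 = mid n j ∨ p.2 = mid n j) →
      (∃ j w, p = (emb n j w, mid n j)) ∨ p = (mid n 0, ctr n) ∨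
        (∃ j, j ≠ (0 : Fin 3) ∧ p = (ctr n, mid n j)) := by
    rintro ⟨x, y⟩ hp ht
    obtain ⟨hx1, hy2, hadj⟩ := h1 _ hp
    simp only at hx1 hy2 hadj ht
    rw [hGraph_adj] at hadj
    rcases hvert_cases x with rfl | ⟨j, rfl⟩ | ⟨j, v, rfl⟩ <;>
      rcases hvert_cases y with rfl | ⟨k, rfl⟩ | ⟨k, w, rfl⟩
    · simp at hadj
    · -- ctr, mid k
      by_cases hk : k = 0
      · subst hk
        exact absurd (memA hx1 (by simp)) hy2
      · exact Or.inr (Or.inr ⟨k, hk, rfl⟩)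
    · simp at hadj
    · -- mid j, ctr
      by_cases hj : j = 0
      · subst hj; exact Or.inr (Or.inl rfl)
      · have : (0 : ℕ) < j.val := by
          rcases Nat.eq_zero_or_pos j.val with h0 | h0
          · exact absurd (Fin.ext h0) hj
          · exact h0
        exact absurd (memA hx1 (by simp; omega)) hy2
    · simp at hadj
    · -- mid j, emb k w
      rw [adj_mid_emb_iff] at hadj
      subst hadj
      exact absurd (memA hx1 (by simp)) hy2
    · simp at hadj
    · -- emb j v, mid k
      rw [adj_emb_mid_iff] at hadj
      subst hadj
      exact Or.inl ⟨j, v, rfl⟩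
    · -- emb, emb : not touching
      exfalso
      rcases ht with ⟨l, hl | hl⟩
      · exact mid_ne_emb l j v hl.symm
      · exact mid_ne_emb l k w hl.symm
  -- any two touching crossing edges coincide
  have touch_unique : ∀ p ∈ P, ∀ q ∈ P,
      (∃ j, p.1 = mid n j ∨ p.2 = mid n j) →
      (∃ j, q.1 = mid n j ∨ q.2 = mid n j) → p = q := by
    intro p hp q hq htp htq
    by_contra hne
    obtain ⟨hne1, hne2, hnadj1, hnadj2⟩ := h2 p hp q hq hne
    obtain ⟨hp1, hp2, -⟩ := h1 p hp
    obtain ⟨hq1, hq2, -⟩ := h1 q hq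
    rcases touch_form p hp htp with ⟨j, w, rfl⟩ | rfl | ⟨j, hj, rfl⟩ <;>
      rcases touch_form q hq htq with ⟨j', w', rfl⟩ | rfl | ⟨j', hj', rfl⟩ <;>
      simp only at hp1 hp2 hq1 hq2 hne1 hne2 hnadj1 hnadj2
    · -- F1 F1
      have hjj' : j ≠ j' := fun h => hne2 (h ▸ rfl)
      have hv : j.val ≠ j'.val := fun h => hjj' (Fin.ext h)
      have hb1 : ¬ (3 * j.val + 1 < 3 * j'.val) := fun h => hp2 (memA hq1 (by simpa using h))
      have hb2 : ¬ (3 * j'.val + 1 < 3 * j.val) := fun h => hq2 (memA hp1 (by simpa using h))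
      omega
    · -- F1 F2
      by_cases hj0 : j = 0
      · subst hj0; exact hp2 hq1
      · have : (0 : ℕ) < j.val := by
          rcases Nat.eq_zero_or_pos j.val with h0 | h0
          · exact absurd (Fin.ext h0) hj0
          · exact h0
        exact hq2 (memA hp1 (by simp; omega))
    · -- F1 F3
      exact hnadj2 (by simp)
    · -- F2 F1
      by_cases hj0 : j' = 0
      · subst hj0; exact hq2 hp1
      · have : (0 : ℕ) < j'.val := by
          rcases Nat.eq_zero_or_pos j'.val with h0 | h0
          · exact absurd (Fin.ext h0) hj0
          · exact h0
        exact hp2 (memA hq1 (by simp; omega))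
    · -- F2 F2
      exact hne rfl
    · -- F2 F3
      exact hp2 hq1
    · -- F3 F1
      exact hnadj1 (by simp)
    · -- F3 F2
      exact hq2 hp1
    · -- F3 F3
      exact hne1 rfl
  -- the form of a non-touching crossing edge
  have int_form : ∀ p ∈ P, ¬ (∃ j, p.1 = mid n j ∨ p.2 = mid n j) →
      ∃ j v w, p = (emb n j v, emb n j w) := by
    rintro ⟨x, y⟩ hp ht
    obtain ⟨-, -, hadj⟩ := h1 _ hp
    rw [hGraph_adj] at hadj
    simp only at ht
    rcases hvert_cases x with rfl | ⟨j, rfl⟩ | ⟨j, v, rfl⟩ <;>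
      rcases hvert_cases y with rfl | ⟨k, rfl⟩ | ⟨k, w, rfl⟩
    · simp at hadj
    · exact absurd ⟨k, Or.inr rfl⟩ ht
    · simp at hadj
    · exact absurd ⟨j, Or.inl rfl⟩ ht
    · exact absurd ⟨j, Or.inl rfl⟩ ht
    · exact absurd ⟨j, Or.inl rfl⟩ ht
    · simp at hadj
    · exact absurd ⟨k, Or.inr rfl⟩ ht
    · rw [adj_emb_emb_iff] at hadj
      obtain ⟨rfl, -⟩ := hadj
      exact ⟨j, v, w, rfl⟩
  -- only one copy can be split
  have onecopy : ∀ p ∈ P, ∀ q ∈ P, ∀ {j k : Fin 3} {a b c d : HVert n},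
      p = (emb n j a, emb n j b) → q = (emb n k c, emb n k d) → j = k := by
    rintro p hp q hq j k a b c d rfl rfl
    by_contra hjk
    obtain ⟨hp1, hp2, -⟩ := h1 _ hp
    obtain ⟨hq1, hq2, -⟩ := h1 _ hq
    simp only at hp1 hp2 hq1 hq2
    have hv : j.val ≠ k.val := fun h => hjk (Fin.ext h)
    rcases Nat.lt_or_ge (3 * j.val) (3 * k.val) with h | h
    · exact hp2 (memA hq1 (by simpa using h))
    · have : 3 * k.val < 3 * j.val := by omega
      exact hq2 (memA hp1 (by simpa using this))
  -- split P into touching and internal edges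
  set Tch : HVert (n + 1) × HVert (n + 1) → Prop :=
    fun p => ∃ j, p.1 = mid n j ∨ p.2 = mid n j with hTch
  have hsplit := Finset.card_filter_add_card_filter_not (s := P) (p := Tch)
  have hTcard : (P.filter Tch).card ≤ 1 := by
    refine Finset.card_le_one.2 ?_
    intro p hp q hq
    rw [Finset.mem_filter] at hp hq
    exact touch_unique p hp.1 q hq.1 hp.2 hq.2
  have hIcard : (P.filter (fun p => ¬ Tch p)).card ≤ n := by
    set I := P.filter (fun p => ¬ Tch p) with hI
    rcases I.eq_empty_or_nonempty with he | ⟨p0, hp0⟩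
    · simp [he]
    · have hp0' := Finset.mem_filter.1 hp0
      obtain ⟨j0, a0, b0, hp0eq⟩ := int_form p0 hp0'.1 hp0'.2
      have shape : ∀ p ∈ I, ∃ v w, p = (emb n j0 v, emb n j0 w) := by
        intro p hp
        have hp' := Finset.mem_filter.1 hp
        obtain ⟨j, v, w, hpe⟩ := int_form p hp'.1 hp'.2
        have := onecopy p hp'.1 p0 hp0'.1 hpe hp0eq
        exact ⟨v, w, by rw [hpe, this]⟩
      set A' : Set (HVert n) := {v | emb n j0 v ∈ A} with hA'def
      have hA' : IsInitialSegment rn A' := by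
        intro a ha b hb
        exact hA _ ha _ ((rUp_emb_emb j0 b a).2 hb)
      set P' : Finset (HVert n × HVert n) := I.image (fun p => (proj p.1, proj p.2)) with hP'
      have hcard : P'.card = I.card := by
        rw [hP']
        apply Finset.card_image_of_injOn
        intro p hp q hq hpq
        obtain ⟨v, w, rfl⟩ := shape p hp
        obtain ⟨v', w', rfl⟩ := shape q hq
        simp only [proj_emb, Prod.mk.injEq] at hpq
        rw [hpq.1, hpq.2]
      have hmatch' : IsCrossingInducedMatching (HGraph n) A' P' := by
        constructor
        · rintro p' hp'
          rw [hP', Finset.mem_image] at hp'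
          obtain ⟨p, hp, rfl⟩ := hp'
          obtain ⟨v, w, rfl⟩ := shape p hp
          obtain ⟨hx, hy, hadj⟩ := h1 _ (Finset.mem_filter.1 hp).1
          simp only [proj_emb]
          simp only at hx hy hadj
          rw [hGraph_adj, adj_emb_emb_iff] at hadj
          exact ⟨hx, hy, hadj.2⟩
        · rintro p' hp' q' hq' hne'
          rw [hP', Finset.mem_image] at hp' hq'
          obtain ⟨p, hp, rfl⟩ := hp'
          obtain ⟨q, hq, rfl⟩ := hq'
          obtain ⟨v, w, rfl⟩ := shape p hp
          obtain ⟨v', w', rfl⟩ := shape q hq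
          have hpq : (emb n j0 v, emb n j0 w) ≠ (emb n j0 v', emb n j0 w') := by
            rintro h; apply hne'; rw [h]
          obtain ⟨d1, d2, d3, d4⟩ := h2 _ (Finset.mem_filter.1 hp).1 _
            (Finset.mem_filter.1 hq).1 hpq
          simp only [proj_emb] at d1 d2 d3 d4 ⊢
          refine ⟨fun h => d1 (by rw [h]), fun h => d2 (by rw [h]), ?_, ?_⟩
          · intro h; exact d3 (by rw [hGraph_adj, adj_emb_emb_iff]; exact ⟨rfl, h⟩)
          · intro h; exact d4 (by rw [hGraph_adj, adj_emb_emb_iff]; exact ⟨rfl, h⟩)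
      calc I.card = P'.card := hcard.symm
        _ ≤ n := W A' hA' P' hmatch'
  omega

end UpperBound
section LowerBound

/-- Any graph with an edge forces mim ≥ 1 on every layout. -/
theorem lower_one {V : Type*} {G : SimpleGraph V} {u v : V} (huv : G.Adj u v)
    (r : V → V → Prop) (hr : IsStrictTotalOrder V r) :
    ∃ (A : Set V) (P : Finset (V × V)), IsInitialSegment r A ∧
      IsCrossingInducedMatching G A P ∧ 1 ≤ P.card := by
  have single : ∀ a b : V, G.Adj a b → r a b →
      ∃ (A : Set V) (P : Finset (V × V)), IsInitialSegment r A ∧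
        IsCrossingInducedMatching G A P ∧ 1 ≤ P.card := by
    intro a b hab hrab
    refine ⟨{x | r x b}, {(a, b)}, ?_, ⟨?_, ?_⟩, by simp⟩
    · intro c hc d hd
      exact hr.trans _ _ _ hd hc
    · intro p hp
      rw [Finset.mem_singleton] at hp
      subst hp
      exact ⟨hrab, hr.irrefl b, hab⟩
    · intro p hp q hq hne
      rw [Finset.mem_singleton] at hp hq
      exact absurd (hp.trans hq.symm) hne
  rcases (haveI := hr; trichotomous_of r u v) with h | h | h
  · exact single u v huv h
  · exact absurd h (G.ne_of_adj huv)
  · exact single v u huv.symm h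

theorem lower_step {m : ℕ} (hm : 1 ≤ m)
    (IH : ∀ r : HVert m → HVert m → Prop, IsStrictTotalOrder (HVert m) r →
      ∃ (A : Set (HVert m)) (P : Finset (HVert m × HVert m)),
        IsInitialSegment r A ∧ IsCrossingInducedMatching (HGraph m) A P ∧ m ≤ P.card) :
    ∀ r : HVert (m + 1) → HVert (m + 1) → Prop, IsStrictTotalOrder (HVert (m + 1)) r →
      ∃ (A : Set (HVert (m + 1))) (P : Finset (HVert (m + 1) × HVert (m + 1))),
        IsInitialSegment r A ∧ IsCrossingInducedMatching (HGraph (m + 1)) A P ∧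
          m + 1 ≤ P.card := by
  classical
  intro r hr
  haveI := hr
  haveI : DecidableRel r := fun a b => Classical.dec _
  letI : LinearOrder (HVert (m + 1)) := linearOrderOfSTO r
  have hlt : ∀ a b : HVert (m + 1), a < b ↔ r a b := fun a b => Iff.rfl
  -- restricted layouts on the three copies
  set ri : Fin 3 → HVert m → HVert m → Prop :=
    fun i v w => r (emb m i v) (emb m i w) with hri_def
  have hri : ∀ i, IsStrictTotalOrder (HVert m) (ri i) := by
    intro i
    refine { trichotomous := ?_, irrefl := ?_, trans := ?_ }
    · intro v w
      suffices H : ri i v w ∨ v = w ∨ ri i w v from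
        fun h1 h2 => H.elim (absurd · h1) (·.elim id (absurd · h2))
      rcases (trichotomous_of r (emb m i v) (emb m i w)) with h | h | h
      · exact Or.inl h
      · exact Or.inr (Or.inl (emb_injective m i h))
      · exact Or.inr (Or.inr h)
    · intro v h
      exact hr.irrefl _ h
    · intro a b c h1 h2
      exact hr.trans _ _ _ h1 h2
  choose A P hinit hmatch hcard using fun i : Fin 3 => IH (ri i) (hri i)
  have hPne : ∀ i, ((P i).Nonempty) := fun i =>
    Finset.card_pos.1 (lt_of_lt_of_le hm (hcard i))
  set t1 : Fin 3 → HVert (m + 1) :=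
    fun i => ((P i).image (fun p => emb m i p.1)).max' ((hPne i).image (fun p => emb m i p.1))
    with ht1_def
  set t2 : Fin 3 → HVert (m + 1) :=
    fun i => ((P i).image (fun p => emb m i p.2)).min' ((hPne i).image (fun p => emb m i p.2))
    with ht2_def
  have Lt1 : ∀ i, ∀ p ∈ P i, emb m i p.1 ≤ t1 i := by
    intro i p hp
    exact Finset.le_max' ((P i).image (fun p => emb m i p.1)) (emb m i p.1)
      (Finset.mem_image.2 ⟨p, hp, rfl⟩)
  have Lt2 : ∀ i, ∀ q ∈ P i, t2 i ≤ emb m i q.2 := by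
    intro i q hq
    exact Finset.min'_le ((P i).image (fun p => emb m i p.2)) (emb m i q.2)
      (Finset.mem_image.2 ⟨q, hq, rfl⟩)
  have ht1mem : ∀ i, ∃ p ∈ P i, t1 i = emb m i p.1 := by
    intro i
    obtain ⟨p, hp, he⟩ := Finset.mem_image.1
      (Finset.max'_mem ((P i).image (fun p => emb m i p.1))
        ((hPne i).image (fun p => emb m i p.1)))
    exact ⟨p, hp, he.symm⟩
  have ht2mem : ∀ i, ∃ q ∈ P i, t2 i = emb m i q.2 := by
    intro i
    obtain ⟨q, hq, he⟩ := Finset.mem_image.1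
      (Finset.min'_mem ((P i).image (fun p => emb m i p.2))
        ((hPne i).image (fun p => emb m i p.2)))
    exact ⟨q, hq, he.symm⟩
  have L3 : ∀ i, ∀ p ∈ P i, ∀ q ∈ P i, emb m i p.1 < emb m i q.2 := by
    intro i p hp q hq
    have hp1 : p.1 ∈ A i := ((hmatch i).1 p hp).1
    have hq2 : q.2 ∉ A i := ((hmatch i).1 q hq).2.1
    rcases (trichotomous_of r (emb m i p.1) (emb m i q.2)) with h | h | h
    · exact h
    · exact absurd (emb_injective m i h ▸ hp1) hq2
    · exact absurd (hinit i _ hp1 _ h) hq2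
  have L4 : ∀ i, t1 i < t2 i := by
    intro i
    obtain ⟨p, hp, he1⟩ := ht1mem i
    obtain ⟨q, hq, he2⟩ := ht2mem i
    rw [he1, he2]
    exact L3 i p hp q hq
  -- externality
  set Ext : Fin 3 → HVert (m + 1) → Prop := fun i x =>
    x = ctr m ∨ ∃ j, j ≠ i ∧ (x = mid m j ∨ ∃ w, x = emb m j w) with hExt_def
  have ext_ne : ∀ {i x}, Ext i x → ∀ a : HVert m, x ≠ emb m i a := by
    rintro i x (rfl | ⟨j, hj, rfl | ⟨w, rfl⟩⟩) a
    · exact ctr_ne_emb i a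
    · exact mid_ne_emb j i a
    · intro h
      exact hj (emb_eq_emb h).1
  have ext_nadj : ∀ {i x}, Ext i x → ∀ a : HVert m,
      ¬ HAdj (m + 1) (emb m i a) x ∧ ¬ HAdj (m + 1) x (emb m i a) := by
    rintro i x (rfl | ⟨j, hj, rfl | ⟨w, rfl⟩⟩) a
    · exact ⟨not_adj_emb_ctr i a, not_adj_ctr_emb i a⟩
    · constructor
      · rw [adj_emb_mid_iff]; exact fun h => hj h.symm
      · rw [adj_mid_emb_iff]; exact fun h => hj h
    · constructor
      · rw [adj_emb_emb_iff]; exact fun h => hj h.1.symm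
      · rw [adj_emb_emb_iff]; exact fun h => hj h.1
  by_contra hcon
  -- the construction: an external split edge plus the matching of copy i
  have CON : ∀ (i : Fin 3) (u v : HVert (m + 1)), Ext i u → Ext i v →
      HAdj (m + 1) u v → u < v → u < t2 i → t1 i < v → False := by
    intro i u v hu hv hadj huv hu2 hv1
    apply hcon
    set x := max (t1 i) u with hx
    have hxt2 : x < t2 i := max_lt (L4 i) hu2
    refine ⟨{z | z ≤ x}, insert (u, v) ((P i).image (fun p => (emb m i p.1, emb m i p.2))),
      ?_, ⟨?_, ?_⟩, ?_⟩
    · intro a ha b hb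
      exact le_of_lt (lt_of_lt_of_le ((hlt b a).2 hb) ha)
    · intro p hp
      rcases Finset.mem_insert.1 hp with rfl | hp
      · refine ⟨?_, ?_, hadj⟩
        · show u ≤ x
          exact le_max_right _ _
        · show ¬ v ≤ x
          exact not_le.2 (max_lt hv1 huv)
      · obtain ⟨q, hq, rfl⟩ := Finset.mem_image.1 hp
        refine ⟨?_, ?_, ?_⟩
        · show emb m i q.1 ≤ x
          exact le_trans (Lt1 i q hq) (le_max_left _ _)
        · show ¬ emb m i q.2 ≤ x
          exact not_le.2 (lt_of_lt_of_le hxt2 (Lt2 i q hq))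
        · rw [hGraph_adj, adj_emb_emb_iff]
          exact ⟨rfl, ((hmatch i).1 q hq).2.2⟩
    · intro p hp q hq hne
      rcases Finset.mem_insert.1 hp with rfl | hp2 <;>
        rcases Finset.mem_insert.1 hq with hq1 | hq2
      · exact absurd hq1.symm hne
      · obtain ⟨q', hqm, rfl⟩ := Finset.mem_image.1 hq2
        refine ⟨fun h => ext_ne hu q'.1 h, fun h => ext_ne hv q'.2 h, ?_, ?_⟩
        · intro h
          exact (ext_nadj hu q'.2).2 h
        · intro h
          exact (ext_nadj hv q'.1).1 h
      · obtain ⟨p', hpm, rfl⟩ := Finset.mem_image.1 hp2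
        subst hq1
        refine ⟨fun h => ext_ne hu p'.1 h.symm, fun h => ext_ne hv p'.2 h.symm, ?_, ?_⟩
        · intro h
          exact (ext_nadj hv p'.1).1 h
        · intro h
          exact (ext_nadj hu p'.2).2 h
      · obtain ⟨p', hpm, rfl⟩ := Finset.mem_image.1 hp2
        obtain ⟨q', hqm, rfl⟩ := Finset.mem_image.1 hq2
        have hpq : p' ≠ q' := fun h => hne (by rw [h])
        obtain ⟨d1, d2, d3, d4⟩ := (hmatch i).2 p' hpm q' hqm hpq
        refine ⟨fun h => d1 (emb_injective m i h), fun h => d2 (emb_injective m i h), ?_, ?_⟩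
        · intro h
          rw [hGraph_adj, adj_emb_emb_iff] at h
          exact d3 h.2
        · intro h
          rw [hGraph_adj, adj_emb_emb_iff] at h
          exact d4 h.2
    · rw [Finset.card_insert_of_notMem, Finset.card_image_of_injective]
      · have := hcard i
        omega
      · intro p q h
        simp only [Prod.mk.injEq] at h
        exact Prod.ext (emb_injective m i h.1) (emb_injective m i h.2)
      · intro hmem
        obtain ⟨q, -, hqe⟩ := Finset.mem_image.1 hmem
        have : u = emb m i q.1 := by
          have := congrArg Prod.fst hqe
          exact this.symm
        exact ext_ne hu q.1 this
  -- every external edge lies entirely on one side of the gap of copy i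
  have key : ∀ (i : Fin 3) (u v : HVert (m + 1)), Ext i u → Ext i v →
      HAdj (m + 1) u v → u < v →
      (u ≤ t1 i ∧ v ≤ t1 i) ∨ (t2 i ≤ u ∧ t2 i ≤ v) := by
    intro i u v hu hv hadj huv
    by_cases hu2 : u < t2 i
    · by_cases hv1 : t1 i < v
      · exact absurd (CON i u v hu hv hadj huv hu2 hv1) id
      · have hv1' : v ≤ t1 i := not_lt.1 hv1
        exact Or.inl ⟨le_of_lt (lt_of_lt_of_le huv hv1'), hv1'⟩
    · have hu2' : t2 i ≤ u := not_lt.1 hu2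
      exact Or.inr ⟨hu2', le_of_lt (lt_of_le_of_lt hu2' huv)⟩
  have side : ∀ (i : Fin 3) (u v : HVert (m + 1)), Ext i u → Ext i v →
      HAdj (m + 1) u v → (u ≤ t1 i ↔ v ≤ t1 i) := by
    intro i u v hu hv hadj
    have hne : u ≠ v := fun h => hAdj_irrefl (m + 1) v (h ▸ hadj)
    have main : ∀ a b : HVert (m + 1), Ext i a → Ext i b → HAdj (m + 1) a b →
        a < b → (a ≤ t1 i ↔ b ≤ t1 i) := by
      intro a b ha hb hab hlt'
      rcases key i a b ha hb hab hlt' with ⟨h1, h2⟩ | ⟨h1, h2⟩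
      · exact iff_of_true h1 h2
      · constructor
        · intro h
          exact absurd (lt_of_lt_of_le (L4 i) h1) (not_lt.2 h)
        · intro h
          exact absurd (lt_of_lt_of_le (L4 i) h2) (not_lt.2 h)
    rcases lt_or_gt_of_ne hne with h | h
    · exact main u v hu hv hadj h
    · exact (main v u hv hu (hAdj_symm _ _ _ hadj) h).symm
  have chain : ∀ (i j : Fin 3), j ≠ i → ∀ w : HVert m,
      (emb m j w ≤ t1 i ↔ ctr m ≤ t1 i) := by
    intro i j hj w
    have e1 : (mid m j ≤ t1 i ↔ emb m j w ≤ t1 i) :=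
      side i _ _ (Or.inr ⟨j, hj, Or.inl rfl⟩) (Or.inr ⟨j, hj, Or.inr ⟨w, rfl⟩⟩)
        (adj_mid_emb j w)
    have e2 : (ctr m ≤ t1 i ↔ mid m j ≤ t1 i) :=
      side i _ _ (Or.inl rfl) (Or.inr ⟨j, hj, Or.inl rfl⟩) (adj_ctr_mid j)
    rw [e1.symm, e2]
  -- pigeonhole on the side of the center
  have pair : ∀ i j : Fin 3, i ≠ j → (ctr m ≤ t1 i ↔ ctr m ≤ t1 j) → False := by
    intro i j hij hs
    obtain ⟨p, hp, hpe⟩ := ht1mem i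
    obtain ⟨q, hq, hqe⟩ := ht1mem j
    by_cases hsi : ctr m ≤ t1 i
    · have h1 : t1 j ≤ t1 i := by
        rw [hqe]
        exact (chain i j (Ne.symm hij) q.1).2 hsi
      have h2 : t1 i ≤ t1 j := by
        rw [hpe]
        exact (chain j i hij p.1).2 (hs.1 hsi)
      have heq : emb m i p.1 = emb m j q.1 := by
        rw [← hpe, ← hqe]
        exact le_antisymm h2 h1
      exact hij (emb_eq_emb heq).1
    · have hsj : ¬ ctr m ≤ t1 j := fun h => hsi (hs.2 h)
      have h1 : ¬ t1 j ≤ t1 i := by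
        rw [hqe]
        intro h
        exact hsi ((chain i j (Ne.symm hij) q.1).1 h)
      have h2 : ¬ t1 i ≤ t1 j := by
        rw [hpe]
        intro h
        exact hsj ((chain j i hij p.1).1 h)
      exact h1 (le_of_not_ge h2)
  by_cases h0 : ctr m ≤ t1 0 <;> by_cases h1 : ctr m ≤ t1 1 <;> by_cases h2 : ctr m ≤ t1 2
  · exact pair 0 1 (by decide) (iff_of_true h0 h1)
  · exact pair 0 1 (by decide) (iff_of_true h0 h1)
  · exact pair 0 2 (by decide) (iff_of_true h0 h2)
  · exact pair 1 2 (by decide) (iff_of_false h1 h2)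
  · exact pair 1 2 (by decide) (iff_of_true h1 h2)
  · exact pair 0 2 (by decide) (iff_of_false h0 h2)
  · exact pair 0 1 (by decide) (iff_of_false h0 h1)
  · exact pair 0 1 (by decide) (iff_of_false h0 h1)

end LowerBound
section Main

theorem width_both : ∀ n : ℕ,
    (∃ r : HVert n → HVert n → Prop, IsStrictTotalOrder (HVert n) r ∧
      ∀ A : Set (HVert n), IsInitialSegment r A →
        ∀ P : Finset (HVert n × HVert n),
          IsCrossingInducedMatching (HGraph n) A P → P.card ≤ n) ∧
    (∀ r : HVert n → HVert n → Prop, IsStrictTotalOrder (HVert n) r →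
      ∃ (A : Set (HVert n)) (P : Finset (HVert n × HVert n)),
        IsInitialSegment r A ∧ IsCrossingInducedMatching (HGraph n) A P ∧ n ≤ P.card) := by
  intro n
  induction n with
  | zero =>
    constructor
    · refine ⟨fun _ _ => False, ?_, ?_⟩
      · refine { trichotomous := ?_, irrefl := ?_, trans := ?_ }
        · intro x y
          exact fun _ _ => ((inferInstance : Subsingleton Unit)).allEq x y
        · intro x h
          exact h
        · intro a b c h _
          exact h.elim
      · intro A hA P hP
        rcases P.eq_empty_or_nonempty with rfl | ⟨p, hp⟩
        · simp
        · exact ((hP.1 p hp).2.2 : False).elim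
    · intro r hr
      exact ⟨∅, ∅, fun a ha => absurd ha (by simp), empty_matching _ _, Nat.zero_le _⟩
  | succ n ih =>
    obtain ⟨⟨rn, hrn, hW⟩, hL⟩ := ih
    constructor
    · exact ⟨rUp rn, rUp_STO hrn, upper_step hW⟩
    · rcases n with - | k
      · intro r hr
        have hadj : (HGraph (0 + 1)).Adj (ctr 0) (mid 0 0) :=
          (hGraph_adj _ _).2 (adj_ctr_mid (n := 0) 0)
        exact lower_one hadj r hr
      · exact lower_step (Nat.succ_le_succ (Nat.zero_le k)) hL

end Main

/-- For every `n`, the linear mim-width of `H_n` equals `n`. -/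
theorem linMimWidth_HGraph (n : ℕ) : linMimWidth (HGraph n) = n := by
  obtain ⟨⟨r, hr, hW⟩, hL⟩ := width_both n
  apply le_antisymm
  · exact linMimWidth_le hr (layoutMimWidth_le hW)
  · refine le_linMimWidth hr ?_
    intro r' hr'
    obtain ⟨A, P, hA, hM, hc⟩ := hL r' hr'
    exact le_trans hc (le_trans (le_cutMim hM) (le_layoutMimWidth hA))
end

section
/- For all positive integers n and m, the simultaneous interval number of the complete bipartite graph K_{n,m} equals min{n, m}. -/
section Aux

open Sum

variable {n m : ℕ}

/-- Construction with `d = n`: left vertices get big intervals and singleton labels,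
right vertices get distinct point intervals and full labels. -/
lemma rep_left (n m : ℕ) :
    ∃ (l r : Fin n ⊕ Fin m → ℝ) (lab : Fin n ⊕ Fin m → Set (Fin n)),
      IsSimRep (completeBipartiteGraph (Fin n) (Fin m)) n l r lab := by
  refine ⟨Sum.elim (fun _ => (0 : ℝ)) (fun j => (j : ℝ)),
    Sum.elim (fun _ => (m : ℝ)) (fun j => (j : ℝ)),
    Sum.elim (fun i => {i}) (fun _ => Set.univ), ?_, ?_⟩
  · rintro (i | j) <;> simp
  · rintro (i | j) (i' | j') huv
    · have hne : i ≠ i' := fun h => huv (by rw [h])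
      simp only [completeBipartiteGraph_adj]
      constructor
      · rintro (⟨-, h⟩ | ⟨h, -⟩) <;> simp at h
      · rintro ⟨-, c, hc1, hc2⟩
        simp only [Sum.elim_inl, Set.mem_singleton_iff] at hc1 hc2
        exact absurd (hc1 ▸ hc2) hne
    · constructor
      · intro _
        refine ⟨⟨(j' : ℝ), ?_⟩, ⟨i, ?_⟩⟩
        · simp only [Sum.elim_inl, Sum.elim_inr, Set.mem_inter_iff, Set.mem_Icc]
          refine ⟨⟨by positivity, le_of_lt (by exact_mod_cast j'.2)⟩, le_refl _, le_refl _⟩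
        · simp
      · intro _; simp
    · constructor
      · intro _
        refine ⟨⟨(j : ℝ), ?_⟩, ⟨i', ?_⟩⟩
        · simp only [Sum.elim_inl, Sum.elim_inr, Set.mem_inter_iff, Set.mem_Icc]
          refine ⟨⟨le_refl _, le_refl _⟩, by positivity, le_of_lt (by exact_mod_cast j.2)⟩
        · simp
      · intro _; simp
    · have hne : j ≠ j' := fun h => huv (by rw [h])
      simp only [completeBipartiteGraph_adj]
      constructor
      · rintro (⟨h, -⟩ | ⟨-, h⟩) <;> simp at h
      · rintro ⟨⟨x, hx1, hx2⟩, -⟩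
        simp only [Sum.elim_inr, Set.mem_Icc] at hx1 hx2
        have : (j : ℝ) = (j' : ℝ) := by
          have h1 : x = (j : ℝ) := le_antisymm hx1.2 hx1.1
          have h2 : x = (j' : ℝ) := le_antisymm hx2.2 hx2.1
          rw [← h1, h2]
        exact absurd (Fin.ext (by exact_mod_cast this)) hne

/-- Construction with `d = m`, mirror image. -/
lemma rep_right (n m : ℕ) :
    ∃ (l r : Fin n ⊕ Fin m → ℝ) (lab : Fin n ⊕ Fin m → Set (Fin m)),
      IsSimRep (completeBipartiteGraph (Fin n) (Fin m)) m l r lab := by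
  refine ⟨Sum.elim (fun i => (i : ℝ)) (fun _ => (0 : ℝ)),
    Sum.elim (fun i => (i : ℝ)) (fun _ => (n : ℝ)),
    Sum.elim (fun _ => Set.univ) (fun j => {j}), ?_, ?_⟩
  · rintro (i | j) <;> simp
  · rintro (i | j) (i' | j') huv
    · have hne : i ≠ i' := fun h => huv (by rw [h])
      simp only [completeBipartiteGraph_adj]
      constructor
      · rintro (⟨-, h⟩ | ⟨h, -⟩) <;> simp at h
      · rintro ⟨⟨x, hx1, hx2⟩, -⟩
        simp only [Sum.elim_inl, Set.mem_Icc] at hx1 hx2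
        have : (i : ℝ) = (i' : ℝ) := by
          have h1 : x = (i : ℝ) := le_antisymm hx1.2 hx1.1
          have h2 : x = (i' : ℝ) := le_antisymm hx2.2 hx2.1
          rw [← h1, h2]
        exact absurd (Fin.ext (by exact_mod_cast this)) hne
    · constructor
      · intro _
        refine ⟨⟨(i : ℝ), ?_⟩, ⟨j', ?_⟩⟩
        · simp only [Sum.elim_inl, Sum.elim_inr, Set.mem_inter_iff, Set.mem_Icc]
          refine ⟨⟨le_refl _, le_refl _⟩, by positivity, le_of_lt (by exact_mod_cast i.2)⟩
        · simp
      · intro _; simp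
    · constructor
      · intro _
        refine ⟨⟨(i' : ℝ), ?_⟩, ⟨j, ?_⟩⟩
        · simp only [Sum.elim_inl, Sum.elim_inr, Set.mem_inter_iff, Set.mem_Icc]
          refine ⟨⟨by positivity, le_of_lt (by exact_mod_cast i'.2)⟩, le_refl _, le_refl _⟩
        · simp
      · intro _; simp
    · have hne : j ≠ j' := fun h => huv (by rw [h])
      simp only [completeBipartiteGraph_adj]
      constructor
      · rintro (⟨h, -⟩ | ⟨-, h⟩) <;> simp at h
      · rintro ⟨-, c, hc1, hc2⟩
        simp only [Sum.elim_inr, Set.mem_singleton_iff] at hc1 hc2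
        exact absurd (hc1 ▸ hc2) hne

/-- Lower bound: any simultaneous interval representation of `K_{n,m}` needs at least
`min n m` labels. -/
lemma lower_bound (n m d : ℕ) (hn : 0 < n) (hm : 0 < m)
    (l r : Fin n ⊕ Fin m → ℝ) (lab : Fin n ⊕ Fin m → Set (Fin d))
    (h : IsSimRep (completeBipartiteGraph (Fin n) (Fin m)) d l r lab) :
    min n m ≤ d := by
  obtain ⟨hlr, hadj⟩ := h
  haveI : Nonempty (Fin n ⊕ Fin m) := ⟨Sum.inl ⟨0, hn⟩⟩
  obtain ⟨u, hu⟩ := Finite.exists_min r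
  rcases u with i₀ | j₀
  · -- minimum attained on the left: then d ≥ m
    have key : ∀ j : Fin m, r (Sum.inl i₀) ∈ Set.Icc (l (Sum.inr j)) (r (Sum.inr j)) ∧
        (lab (Sum.inr j) ∩ lab (Sum.inl i₀)).Nonempty := by
      intro j
      have hne : (Sum.inl i₀ : Fin n ⊕ Fin m) ≠ Sum.inr j := by simp
      have hA : (completeBipartiteGraph (Fin n) (Fin m)).Adj (Sum.inl i₀) (Sum.inr j) := by
        simp
      obtain ⟨⟨x, hx1, hx2⟩, c, hc1, hc2⟩ := (hadj _ _ hne).1 hA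
      refine ⟨⟨le_trans hx2.1 hx1.2, hu (Sum.inr j)⟩, ⟨c, hc2, hc1⟩⟩
    have hf : ∀ j : Fin m, ∃ c : Fin d, c ∈ lab (Sum.inr j) := by
      intro j
      obtain ⟨c, hc, -⟩ := (key j).2
      exact ⟨c, hc⟩
    choose f hfmem using fun j => (key j).2
    have finj : Function.Injective f := by
      intro j j' hjj'
      by_contra hne
      have hne' : (Sum.inr j : Fin n ⊕ Fin m) ≠ Sum.inr j' := by
        simp [hne]
      have hA : ¬ (completeBipartiteGraph (Fin n) (Fin m)).Adj (Sum.inr j) (Sum.inr j') := by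
        simp
      apply hA
      rw [hadj _ _ hne']
      refine ⟨⟨r (Sum.inl i₀), (key j).1, (key j').1⟩, ⟨f j, (hfmem j).1, ?_⟩⟩
      rw [hjj']
      exact (hfmem j').1
    have := Fintype.card_le_of_injective f finj
    simp only [Fintype.card_fin] at this
    exact le_trans (min_le_right n m) this
  · -- minimum attained on the right: then d ≥ n
    have key : ∀ i : Fin n, r (Sum.inr j₀) ∈ Set.Icc (l (Sum.inl i)) (r (Sum.inl i)) ∧
        (lab (Sum.inl i) ∩ lab (Sum.inr j₀)).Nonempty := by
      intro i
      have hne : (Sum.inr j₀ : Fin n ⊕ Fin m) ≠ Sum.inl i := by simp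
      have hA : (completeBipartiteGraph (Fin n) (Fin m)).Adj (Sum.inr j₀) (Sum.inl i) := by
        simp
      obtain ⟨⟨x, hx1, hx2⟩, c, hc1, hc2⟩ := (hadj _ _ hne).1 hA
      refine ⟨⟨le_trans hx2.1 hx1.2, hu (Sum.inl i)⟩, ⟨c, hc2, hc1⟩⟩
    choose f hfmem using fun i => (key i).2
    have finj : Function.Injective f := by
      intro i i' hii'
      by_contra hne
      have hne' : (Sum.inl i : Fin n ⊕ Fin m) ≠ Sum.inl i' := by
        simp [hne]
      have hA : ¬ (completeBipartiteGraph (Fin n) (Fin m)).Adj (Sum.inl i) (Sum.inl i') := by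
        simp
      apply hA
      rw [hadj _ _ hne']
      refine ⟨⟨r (Sum.inr j₀), (key i).1, (key i').1⟩, ⟨f i, (hfmem i).1, ?_⟩⟩
      rw [hii']
      exact (hfmem i').1
    have := Fintype.card_le_of_injective f finj
    simp only [Fintype.card_fin] at this
    exact le_trans (min_le_left n m) this

end Aux

/-- The simultaneous interval number of the complete bipartite graph
`K_{n,m}` (with `n, m ≥ 1`) equals `min n m`. -/
theorem si_completeBipartiteGraph (n m : ℕ) (hn : 0 < n) (hm : 0 < m) :
    si (completeBipartiteGraph (Fin n) (Fin m)) = min n m := by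
  have hmem : min n m ∈ {d | ∃ (l r : Fin n ⊕ Fin m → ℝ)
      (lab : Fin n ⊕ Fin m → Set (Fin d)),
      IsSimRep (completeBipartiteGraph (Fin n) (Fin m)) d l r lab} := by
    rcases le_total n m with hle | hle
    · rw [min_eq_left hle]; exact rep_left n m
    · rw [min_eq_right hle]; exact rep_right n m
  apply le_antisymm
  · exact Nat.sInf_le hmem
  · apply le_csInf ⟨_, hmem⟩
    rintro d ⟨l, r, lab, hrep⟩
    exact lower_bound n m d hn hm l r lab hrep
end
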